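/- arXiv:2601.05550 — 5 statements merged into one kernel-verified Lean document; each statement's English description precedes it below -/
import Mathlib

section
/- Let g : ℝ → ℝ be continuous, non-decreasing and everywhere positive, and let C > 0, q ≥ 0, θ > 0 and τ > qθ be constants. Then for every a ∈ ℝ there exist R > 0 and a function v : [0,R) → ℝ such that: v is continuous on [0,R) with v(0) = a; v is differentiable at 0 from the right with v'(0) = 0; for every r ∈ (0,R) the derivative v'(r) exists and equals C · r^{-q} · (∫_0^r s^{τ-1} g(v(s)) ds)^{1/θ}; and v'(r) > 0 and v''(r) > 0 for all r ∈ (0,R). -/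
open Real MeasureTheory Set Filter Topology ENNReal

/-- The right-hand side of the Cauchy problem (★):
`C · r^{-q} · (∫_0^r s^{τ-1} g(v(s)) ds)^{1/θ}`. -/
noncomputable def cauchyRHS (C q τ θ : ℝ) (g v : ℝ → ℝ) (r : ℝ) : ℝ :=
  C * r ^ (-q) * (∫ s in (0:ℝ)..r, s ^ (τ - 1) * g (v s)) ^ (1 / θ)

/-- `v : ℝ → ℝ` solves the Cauchy problem (★) on `[0, R)` (with `R ∈ (0, ∞]` an
extended nonnegative real): `v` is continuous on `[0, R)`, `v 0 = a`, and at every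
`r ∈ (0, R)` the derivative of `v` exists and is given by `cauchyRHS`. -/
def SolvesCauchy (C q τ θ a : ℝ) (g : ℝ → ℝ) (R : ℝ≥0∞) (v : ℝ → ℝ) : Prop :=
  ContinuousOn v {r : ℝ | 0 ≤ r ∧ ENNReal.ofReal r < R} ∧
  v 0 = a ∧
  ∀ r : ℝ, 0 < r → ENNReal.ofReal r < R → HasDerivAt v (cauchyRHS C q τ θ g v r) r

/-- The Keller–Osserman condition:
`∫_b^∞ (∫_0^t g(s) ds)^{-1/(θ+1)} dt = +∞` for every `b > 0`. -/
def KellerOsserman (θ : ℝ) (g : ℝ → ℝ) : Prop :=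
  ∀ b : ℝ, 0 < b →
    ∫⁻ t in Set.Ioi b, ENNReal.ofReal ((∫ s in (0:ℝ)..t, g s) ^ (-(1 / (θ + 1)))) = ⊤

/-!
A solution is a fixed point of `v ↦ a + ∫₀ʳ F[v]` on a short interval `[0, R]`, where `F[v]`
is the right-hand side of `(★)`. Because `g` is non-decreasing, this operator is monotone on the
complete lattice of non-decreasing functions `ℝ → [a, a + 1]`, and the bound
`F[u](t) ≤ C (g(a + 1)/τ)^{1/θ} t^{τ/θ - q}` shows that it maps this lattice into itself once
`R` is small; Knaster–Tarski then gives the fixed point, without any compactness argument.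
Since `τ > qθ`, the same bound gives `v'(0) = 0`. Finally, for non-decreasing `v` the inner integral
`w(r) = ∫₀ʳ s^{τ-1} g(v(s)) ds` satisfies `τ w(r) ≤ r w'(r)`, which makes the product-rule
expression for `v''` positive.
-/

open intervalIntegral

section WeightedIntegral

variable {τ t : ℝ} {h : ℝ → ℝ}

theorem Monotone.intervalIntegrable_rpow_mul (hh : Monotone h) (hτ : 0 < τ) (x y : ℝ) :
    IntervalIntegrable (fun s => s ^ (τ - 1) * h s) volume x y := by
  refine intervalIntegrable_iff.2 <|
    (intervalIntegrable_iff.1 (intervalIntegrable_rpow' (by linarith))).mul_bdd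
      (c := max |h (min x y)| |h (max x y)|) hh.measurable.aestronglyMeasurable <|
      (ae_restrict_iff' measurableSet_uIoc).2 (ae_of_all _ fun s hs => ?_)
  exact abs_le_max_abs_abs (hh hs.1.le) (hh hs.2)

theorem Monotone.continuous_integral_rpow_mul (hh : Monotone h) (hτ : 0 < τ) :
    Continuous fun t => ∫ s in (0:ℝ)..t, s ^ (τ - 1) * h s :=
  continuous_primitive (hh.intervalIntegrable_rpow_mul hτ) 0

theorem Monotone.integral_rpow_mul_le (hh : Monotone h) (hτ : 0 < τ) (ht : 0 ≤ t) :
    ∫ s in (0:ℝ)..t, s ^ (τ - 1) * h s ≤ h t * t ^ τ / τ := by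
  calc ∫ s in (0:ℝ)..t, s ^ (τ - 1) * h s ≤ ∫ s in (0:ℝ)..t, s ^ (τ - 1) * h t :=
        integral_mono_on ht (hh.intervalIntegrable_rpow_mul hτ 0 t)
          ((intervalIntegrable_rpow' (by linarith)).mul_const _)
          fun s hs => mul_le_mul_of_nonneg_left (hh hs.2) (rpow_nonneg hs.1 _)
    _ = h t * t ^ τ / τ := by
        rw [intervalIntegral.integral_mul_const, integral_rpow (Or.inl (by linarith)),
          sub_add_cancel, zero_rpow hτ.ne']
        ring

theorem Monotone.integral_rpow_mul_pos (hh : Monotone h) (hpos : ∀ s, 0 < h s) (hτ : 0 < τ)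
    (ht : 0 < t) : 0 < ∫ s in (0:ℝ)..t, s ^ (τ - 1) * h s :=
  intervalIntegral_pos_of_pos_on (hh.intervalIntegrable_rpow_mul hτ 0 t)
    (fun s hs => mul_pos (rpow_pos_of_pos hs.1 _) (hpos s)) ht

theorem Monotone.hasDerivAt_integral_rpow_mul (hh : Monotone h) (hτ : 0 < τ)
    (hc : ContinuousAt h t) (ht : 0 < t) :
    HasDerivAt (fun t => ∫ s in (0:ℝ)..t, s ^ (τ - 1) * h s) (t ^ (τ - 1) * h t) t :=
  integral_hasDerivAt_right (hh.intervalIntegrable_rpow_mul hτ 0 t)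
    ((measurable_id.pow_const _).mul hh.measurable).stronglyMeasurable.stronglyMeasurableAtFilter
    ((continuousAt_rpow_const _ _ (Or.inl ht.ne')).mul hc)

end WeightedIntegral

section CauchyRHS

variable {C q τ θ t M : ℝ} {g u u' : ℝ → ℝ}

theorem cauchyRHS_zero (hθ : θ ≠ 0) : cauchyRHS C q τ θ g u 0 = 0 := by
  simp [cauchyRHS, hθ]

theorem cauchyRHS_nonneg (hC : 0 ≤ C) (hg : ∀ x, 0 ≤ g x) (ht : 0 ≤ t) :
    0 ≤ cauchyRHS C q τ θ g u t :=
  mul_nonneg (mul_nonneg hC (rpow_nonneg ht _)) <| rpow_nonneg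
    (integral_nonneg ht fun _ hs => mul_nonneg (rpow_nonneg hs.1 _) (hg _)) _

theorem cauchyRHS_pos (hC : 0 < C) (hτ : 0 < τ) (hg : Monotone g) (hg_pos : ∀ x, 0 < g x)
    (hu : Monotone u) (ht : 0 < t) : 0 < cauchyRHS C q τ θ g u t :=
  mul_pos (mul_pos hC (rpow_pos_of_pos ht _)) <|
    rpow_pos_of_pos ((hg.comp hu).integral_rpow_mul_pos (fun _ => hg_pos _) hτ ht) _

theorem cauchyRHS_le_of_le (hC : 0 ≤ C) (hθ : 0 < θ) (hτ : 0 < τ) (hg : Monotone g)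
    (hg0 : ∀ x, 0 ≤ g x) (hu : Monotone u) (ht : 0 < t) (hM : g (u t) ≤ M) :
    cauchyRHS C q τ θ g u t ≤ C * (M / τ) ^ (1 / θ) * t ^ (τ / θ - q) := by
  have hM0 : 0 ≤ M := (hg0 _).trans hM
  calc cauchyRHS C q τ θ g u t ≤ C * t ^ (-q) * (M * t ^ τ / τ) ^ (1 / θ) := by
        unfold cauchyRHS
        gcongr
        · exact integral_nonneg ht.le fun s hs => mul_nonneg (rpow_nonneg hs.1 _) (hg0 _)
        · exact ((hg.comp hu).integral_rpow_mul_le hτ ht.le).trans (by gcongr; exact hM)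
    _ = C * (M / τ) ^ (1 / θ) * t ^ (τ / θ - q) := by
        rw [mul_div_right_comm, mul_rpow (by positivity) (by positivity), ← rpow_mul ht.le,
          sub_eq_add_neg, rpow_add ht, mul_one_div]
        ring

theorem measurable_cauchyRHS (hτ : 0 < τ) (hg : Monotone g) (hu : Monotone u) :
    Measurable (cauchyRHS C q τ θ g u) :=
  (measurable_const.mul (measurable_id.pow_const _)).mul
    (((hg.comp hu).continuous_integral_rpow_mul hτ).measurable.pow_const _)

theorem continuousOn_cauchyRHS (hθ : 0 < θ) (hτ : 0 < τ) (hg : Monotone g) (hu : Monotone u) :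
    ContinuousOn (cauchyRHS C q τ θ g u) (Ioi 0) := fun t ht =>
  ((continuousAt_const.mul (continuousAt_rpow_const _ _ (Or.inl (ne_of_gt ht)))).mul
    (((hg.comp hu).continuous_integral_rpow_mul hτ).continuousAt.rpow_const
      (Or.inr (by positivity)))).continuousWithinAt

theorem tendsto_cauchyRHS_nhdsGT_zero (hC : 0 ≤ C) (hθ : 0 < θ) (hτ : 0 < τ)
    (hqτ : q < τ / θ) (hg : Monotone g) (hg0 : ∀ x, 0 ≤ g x) (hu : Monotone u) :
    Tendsto (cauchyRHS C q τ θ g u) (𝓝[>] 0) (𝓝 0) := by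
  have hbound :
      Tendsto (fun t => C * (g (u 1) / τ) ^ (1 / θ) * t ^ (τ / θ - q)) (𝓝[>] 0) (𝓝 0) := by
    simpa [zero_rpow (sub_pos.2 hqτ).ne'] using
      (((continuous_rpow_const (sub_pos.2 hqτ).le).tendsto 0).mono_left
        nhdsWithin_le_nhds).const_mul (C * (g (u 1) / τ) ^ (1 / θ))
  refine squeeze_zero' (eventually_nhdsWithin_of_forall fun t ht =>
    cauchyRHS_nonneg hC hg0 (le_of_lt ht)) ?_ hbound
  filter_upwards [Ioo_mem_nhdsGT one_pos] with t ht
  exact cauchyRHS_le_of_le hC hθ hτ hg hg0 hu ht.1 (hg (hu ht.2.le))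

theorem cauchyRHS_mono (hC : 0 ≤ C) (hθ : 0 < θ) (hτ : 0 < τ) (hg : Monotone g)
    (hg0 : ∀ x, 0 ≤ g x) (hu : Monotone u) (hu' : Monotone u') (huu' : u ≤ u') (ht : 0 ≤ t) :
    cauchyRHS C q τ θ g u t ≤ cauchyRHS C q τ θ g u' t := by
  unfold cauchyRHS
  gcongr
  · exact integral_nonneg ht fun _ hs => mul_nonneg (rpow_nonneg hs.1 _) (hg0 _)
  · exact integral_mono_on ht ((hg.comp hu).intervalIntegrable_rpow_mul hτ 0 t)
      ((hg.comp hu').intervalIntegrable_rpow_mul hτ 0 t)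
      fun s hs => mul_le_mul_of_nonneg_left (hg (huu' s)) (rpow_nonneg hs.1 _)

theorem intervalIntegrable_cauchyRHS (hC : 0 ≤ C) (hθ : 0 < θ) (hτ : 0 < τ)
    (hα : -1 < τ / θ - q) (hg : Monotone g) (hg0 : ∀ x, 0 ≤ g x) (hu : Monotone u)
    {R : ℝ} (hR : 0 ≤ R) : IntervalIntegrable (cauchyRHS C q τ θ g u) volume 0 R := by
  refine ((intervalIntegrable_rpow' hα).const_mul (C * (g (u R) / τ) ^ (1 / θ))).mono_fun'
    (measurable_cauchyRHS hτ hg hu).aestronglyMeasurable ?_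
  rw [uIoc_of_le hR]
  refine (ae_restrict_iff' measurableSet_Ioc).2 (ae_of_all _ fun t ht => ?_)
  show ‖cauchyRHS C q τ θ g u t‖ ≤ _
  rw [Real.norm_of_nonneg (cauchyRHS_nonneg hC hg0 ht.1.le)]
  exact cauchyRHS_le_of_le hC hθ hτ hg hg0 hu ht.1 (hg (hu ht.2))

theorem integral_cauchyRHS_le (hC : 0 ≤ C) (hθ : 0 < θ) (hτ : 0 < τ) (hα : -1 < τ / θ - q)
    (hg : Monotone g) (hg0 : ∀ x, 0 ≤ g x) (hu : Monotone u) {b : ℝ} (hub : ∀ s, u s ≤ b)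
    (ht : 0 ≤ t) :
    ∫ s in (0:ℝ)..t, cauchyRHS C q τ θ g u s ≤
      C * (g b / τ) ^ (1 / θ) / (τ / θ - q + 1) * t ^ (τ / θ - q + 1) := by
  calc ∫ s in (0:ℝ)..t, cauchyRHS C q τ θ g u s
      ≤ ∫ s in (0:ℝ)..t, C * (g b / τ) ^ (1 / θ) * s ^ (τ / θ - q) :=
        integral_mono_on_of_le_Ioo ht (intervalIntegrable_cauchyRHS hC hθ hτ hα hg hg0 hu ht)
          ((intervalIntegrable_rpow' hα).const_mul _)
          fun s hs => cauchyRHS_le_of_le hC hθ hτ hg hg0 hu hs.1 (hg (hub s))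
    _ = _ := by
        rw [intervalIntegral.integral_const_mul, integral_rpow (Or.inl hα),
          zero_rpow (by linarith), sub_zero]
        ring

theorem exists_pos_hasDerivAt_cauchyRHS (hC : 0 < C) (hθ : 0 < θ) (hτ : 0 < τ)
    (hqτ : q < τ / θ) (hgc : Continuous g) (hg : Monotone g) (hg_pos : ∀ x, 0 < g x)
    (hu : Monotone u) (huc : ContinuousAt u t) (ht : 0 < t) :
    ∃ D > 0, HasDerivAt (cauchyRHS C q τ θ g u) D t := by
  set w := ∫ s in (0:ℝ)..t, s ^ (τ - 1) * g (u s)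
  set w' := t ^ (τ - 1) * g (u t) with hw'
  have hw : 0 < w := (hg.comp hu).integral_rpow_mul_pos (fun _ => hg_pos _) hτ ht
  have hww' : τ * w ≤ t * w' := by
    have h1 := (hg.comp hu).integral_rpow_mul_le hτ ht.le
    have h2 : t * w' = g (u t) * t ^ τ := by
      rw [hw', rpow_sub_one ht.ne']
      field_simp
    rw [le_div_iff₀ hτ] at h1
    simp only [Function.comp] at h1
    linarith
  have hkey : 0 < t * w' / θ - q * w := by
    have : q * w < τ / θ * w := mul_lt_mul_of_pos_right hqτ hw
    have : τ / θ * w ≤ t * w' / θ := by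
      rw [div_mul_eq_mul_div]; exact div_le_div_of_nonneg_right hww' hθ.le
    linarith
  refine ⟨C * t ^ (-q - 1) * w ^ (1 / θ - 1) * (t * w' / θ - q * w), by positivity, ?_⟩
  have hF : HasDerivAt (cauchyRHS C q τ θ g u) (C * (-q * t ^ (-q - 1)) * w ^ (1 / θ) +
      C * t ^ (-q) * (w' * (1 / θ) * w ^ (1 / θ - 1))) t :=
    ((hasDerivAt_rpow_const (Or.inl ht.ne')).const_mul C).mul
      (((hg.comp hu).hasDerivAt_integral_rpow_mul hτ (hgc.continuousAt.comp huc) ht).rpow_const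
        (Or.inl hw.ne'))
  refine hF.congr_deriv ?_
  rw [show t ^ (-q) = t ^ (-q - 1) * t by rw [← rpow_add_one ht.ne']; ring_nf,
    show w ^ (1 / θ) = w ^ (1 / θ - 1) * w by rw [← rpow_add_one hw.ne']; ring_nf]
  field_simp
  ring

end CauchyRHS

section PicardMap

-- Extended constantly outside `[0, R]`, so that it acts on functions on all of `ℝ`.
noncomputable def picardMap (C q τ θ a : ℝ) (g : ℝ → ℝ) {R : ℝ} (hR : 0 ≤ R) (u : ℝ → ℝ) :
    ℝ → ℝ :=
  IccExtend hR fun r => a + ∫ t in (0:ℝ)..r, cauchyRHS C q τ θ g u t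

variable {C q τ θ a b R r : ℝ} {g u u' : ℝ → ℝ} (hR : 0 ≤ R)

theorem picardMap_of_mem (hr : r ∈ Icc 0 R) :
    picardMap C q τ θ a g hR u r = a + ∫ t in (0:ℝ)..r, cauchyRHS C q τ θ g u t :=
  IccExtend_of_mem hR _ hr

theorem picardMap_zero : picardMap C q τ θ a g hR u 0 = a := by
  rw [picardMap_of_mem hR ⟨le_rfl, hR⟩, integral_same, add_zero]

theorem continuous_picardMap (hint : IntervalIntegrable (cauchyRHS C q τ θ g u) volume 0 R) :
    Continuous (picardMap C q τ θ a g hR u) := by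
  refine continuous_IccExtend_iff.2 (continuous_const.add ?_)
  have := continuousOn_primitive_interval' hint left_mem_uIcc
  rw [uIcc_of_le hR] at this
  exact this.domRestrict

theorem monotone_picardMap (hC : 0 ≤ C) (hg0 : ∀ x, 0 ≤ g x)
    (hint : IntervalIntegrable (cauchyRHS C q τ θ g u) volume 0 R) :
    Monotone (picardMap C q τ θ a g hR u) :=
  Monotone.IccExtend _ fun x y hxy => (add_le_add_iff_left a).2 <|
    integral_mono_interval le_rfl x.2.1 hxy
      ((ae_restrict_iff' measurableSet_Ioc).2 <|
        ae_of_all _ fun _ ht => cauchyRHS_nonneg hC hg0 ht.1.le)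
      (hint.mono_set (uIcc_subset_uIcc left_mem_uIcc (by rw [uIcc_of_le hR]; exact y.2)))

theorem picardMap_mem_Icc (hC : 0 ≤ C) (hg0 : ∀ x, 0 ≤ g x)
    (hbound : ∀ r ∈ Icc 0 R, ∫ t in (0:ℝ)..r, cauchyRHS C q τ θ g u t ≤ b - a) (x : ℝ) :
    picardMap C q τ θ a g hR u x ∈ Icc a b := by
  have (r : Icc 0 R) : a + ∫ t in (0:ℝ)..r, cauchyRHS C q τ θ g u t ∈ Icc a b :=
    ⟨le_add_of_nonneg_right (integral_nonneg r.2.1 fun _ ht => cauchyRHS_nonneg hC hg0 ht.1),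
      by linarith [hbound r r.2]⟩
  exact this _

theorem picardMap_mono
    (hint : IntervalIntegrable (cauchyRHS C q τ θ g u) volume 0 R)
    (hint' : IntervalIntegrable (cauchyRHS C q τ θ g u') volume 0 R)
    (hle : ∀ t ∈ Icc 0 R, cauchyRHS C q τ θ g u t ≤ cauchyRHS C q τ θ g u' t) :
    picardMap C q τ θ a g hR u ≤ picardMap C q τ θ a g hR u' := by
  have (r : Icc 0 R) : a + ∫ t in (0:ℝ)..r, cauchyRHS C q τ θ g u t ≤
      a + ∫ t in (0:ℝ)..r, cauchyRHS C q τ θ g u' t := by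
    have hsub : uIcc 0 (r : ℝ) ⊆ uIcc 0 R :=
      uIcc_subset_uIcc left_mem_uIcc (by rw [uIcc_of_le hR]; exact r.2)
    exact (add_le_add_iff_left a).2 <| integral_mono_on r.2.1 (hint.mono_set hsub)
      (hint'.mono_set hsub) fun t ht => hle t ⟨ht.1, ht.2.trans r.2.2⟩
  exact fun x => this _

theorem hasDerivAt_picardMap (hint : IntervalIntegrable (cauchyRHS C q τ θ g u) volume 0 R)
    (hmeas : Measurable (cauchyRHS C q τ θ g u))
    (hcont : ContinuousAt (cauchyRHS C q τ θ g u) r) (hr : r ∈ Ioo 0 R) :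
    HasDerivAt (picardMap C q τ θ a g hR u) (cauchyRHS C q τ θ g u r) r := by
  have hsub : uIcc 0 r ⊆ uIcc 0 R :=
    uIcc_subset_uIcc left_mem_uIcc (by rw [uIcc_of_le hR]; exact Ioo_subset_Icc_self hr)
  exact ((integral_hasDerivAt_right (hint.mono_set hsub)
    hmeas.stronglyMeasurable.stronglyMeasurableAtFilter hcont).const_add a).congr_of_eventuallyEq
      (eventually_of_mem (Ioo_mem_nhds hr.1 hr.2) fun x hx =>
        picardMap_of_mem hR (Ioo_subset_Icc_self hx))

theorem hasDerivWithinAt_picardMap_zero (hR : 0 < R)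
    (hint : IntervalIntegrable (cauchyRHS C q τ θ g u) volume 0 R)
    (hmeas : Measurable (cauchyRHS C q τ θ g u))
    (hcont : ContinuousWithinAt (cauchyRHS C q τ θ g u) (Ioi 0) 0) :
    HasDerivWithinAt (picardMap C q τ θ a g hR.le u) (cauchyRHS C q τ θ g u 0) (Ici 0) 0 :=
  ((integral_hasDerivWithinAt_right (hint.mono_set (by simp))
    hmeas.stronglyMeasurable.stronglyMeasurableAtFilter hcont).const_add a).congr_of_eventuallyEq
      (eventually_of_mem (Icc_mem_nhdsGE hR) fun _ hx => picardMap_of_mem hR.le hx)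
      (picardMap_of_mem hR.le ⟨le_rfl, hR.le⟩)

theorem exists_monotone_picardMap_eq (hC : 0 ≤ C) (hθ : 0 < θ) (hτ : 0 < τ)
    (hα : -1 < τ / θ - q) (hg : Monotone g) (hg0 : ∀ x, 0 ≤ g x) (hab : a ≤ b)
    (hsmall : C * (g b / τ) ^ (1 / θ) / (τ / θ - q + 1) * R ^ (τ / θ - q + 1) ≤ b - a) :
    ∃ v, Monotone v ∧ picardMap C q τ θ a g hR v = v := by
  have : Fact (a ≤ b) := ⟨hab⟩
  have hint (u : ℝ →o Icc a b) : IntervalIntegrable (cauchyRHS C q τ θ g (u ·)) volume 0 R :=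
    intervalIntegrable_cauchyRHS hC hθ hτ hα hg hg0 (fun _ _ h => u.monotone h) hR
  have hbound (u : ℝ →o Icc a b) (r : ℝ) (hr : r ∈ Icc 0 R) :
      ∫ t in (0:ℝ)..r, cauchyRHS C q τ θ g (u ·) t ≤ b - a :=
    (integral_cauchyRHS_le hC hθ hτ hα hg hg0 (fun _ _ h => u.monotone h) (fun s => (u s).2.2)
      hr.1).trans <| le_trans (mul_le_mul_of_nonneg_left (rpow_le_rpow hr.1 hr.2 (by linarith))
        (div_nonneg (mul_nonneg hC (rpow_nonneg (div_nonneg (hg0 b) hτ.le) _)) (by linarith)))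
      hsmall
  let T : (ℝ →o Icc a b) →o (ℝ →o Icc a b) :=
    { toFun u :=
        { toFun r := ⟨picardMap C q τ θ a g hR (u ·) r,
            picardMap_mem_Icc hR hC hg0 (hbound u) r⟩
          monotone' := fun _ _ h => monotone_picardMap hR hC hg0 (hint u) h }
      monotone' u u' huu' r := picardMap_mono hR (hint u) (hint u')
        (fun t ht => cauchyRHS_mono hC hθ hτ hg hg0 (fun _ _ h => u.monotone h)
          (fun _ _ h => u'.monotone h) (fun s => huu' s) ht.1) r }
  let v : ℝ →o Icc a b := OrderHom.lfp T
  exact ⟨(v ·), fun _ _ h => v.monotone h, funext fun r =>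
    congrArg Subtype.val (DFunLike.congr_fun (OrderHom.map_lfp (α := ℝ →o Icc a b) T) r)⟩

end PicardMap

theorem exists_pos_mul_rpow_le {p ε : ℝ} (hp : 0 < p) (hε : 0 < ε) (c : ℝ) :
    ∃ R > 0, c * R ^ p ≤ ε := by
  have : Tendsto (fun R => c * R ^ p) (𝓝[>] 0) (𝓝 0) := by
    simpa [zero_rpow hp.ne'] using
      (((continuous_rpow_const hp.le).tendsto 0).mono_left nhdsWithin_le_nhds).const_mul c
  obtain ⟨R, hR, hR0⟩ := ((this.eventually (ge_mem_nhds hε)).and self_mem_nhdsWithin).exists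
  exact ⟨R, hR0, hR⟩

/-- Theorem 1.1 (local existence): for every initial value `a` there exist `R > 0`
and a solution `v` of (★) on `[0, R)` with right derivative `0` at the origin and
`v' > 0`, `v'' > 0` on `(0, R)`. -/
theorem local_existence
    (g : ℝ → ℝ) (hg_cont : Continuous g) (hg_mono : Monotone g)
    (hg_pos : ∀ t, 0 < g t)
    (C q θ τ a : ℝ) (hC : 0 < C) (hq : 0 ≤ q) (hθ : 0 < θ) (hτ : q * θ < τ) :
    ∃ R : ℝ, 0 < R ∧ ∃ v : ℝ → ℝ,
      SolvesCauchy C q τ θ a g (ENNReal.ofReal R) v ∧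
      HasDerivWithinAt v 0 (Set.Ici 0) 0 ∧
      ∀ r ∈ Set.Ioo 0 R,
        0 < deriv v r ∧ DifferentiableAt ℝ (deriv v) r ∧ 0 < deriv (deriv v) r := by
  have hτ0 : 0 < τ := (mul_nonneg hq hθ.le).trans_lt hτ
  have hqτ : q < τ / θ := by rwa [lt_div_iff₀ hθ]
  have hα : -1 < τ / θ - q := by linarith
  have hg0 (x : ℝ) : 0 ≤ g x := (hg_pos x).le
  obtain ⟨R, hR, hsmall⟩ := exists_pos_mul_rpow_le (p := τ / θ - q + 1) (by linarith) one_pos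
    (C * (g (a + 1) / τ) ^ (1 / θ) / (τ / θ - q + 1))
  obtain ⟨v, hv_mono, hv⟩ := exists_monotone_picardMap_eq hR.le hC.le hθ hτ0 hα hg_mono
    hg0 (le_add_of_nonneg_right zero_le_one) (by rwa [add_sub_cancel_left])
  have hint := intervalIntegrable_cauchyRHS hC.le hθ hτ0 hα hg_mono hg0 hv_mono hR.le
  have hmeas : Measurable (cauchyRHS C q τ θ g v) := measurable_cauchyRHS hτ0 hg_mono hv_mono
  have hv_cont : Continuous v := hv ▸ continuous_picardMap hR.le hint
  have hderiv (r : ℝ) (hr : r ∈ Ioo 0 R) : HasDerivAt v (cauchyRHS C q τ θ g v r) r := by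
    have := hasDerivAt_picardMap hR.le (a := a) hint hmeas
      ((continuousOn_cauchyRHS hθ hτ0 hg_mono hv_mono).continuousAt (Ioi_mem_nhds hr.1)) hr
    rwa [hv] at this
  refine ⟨R, hR, v, ⟨hv_cont.continuousOn, hv ▸ picardMap_zero hR.le,
    fun r hr0 hrR => hderiv r ⟨hr0, (ofReal_lt_ofReal_iff hR).1 hrR⟩⟩, ?_, fun r hr => ?_⟩
  · have := hasDerivWithinAt_picardMap_zero (a := a) hR hint hmeas <| by
      rw [ContinuousWithinAt, cauchyRHS_zero hθ.ne']
      exact tendsto_cauchyRHS_nhdsGT_zero hC.le hθ hτ0 hqτ hg_mono hg0 hv_mono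
    rwa [hv, cauchyRHS_zero hθ.ne'] at this
  obtain ⟨D, hD, hF⟩ := exists_pos_hasDerivAt_cauchyRHS hC hθ hτ0 hqτ hg_cont hg_mono hg_pos
    hv_mono hv_cont.continuousAt hr.1
  have hdd : HasDerivAt (deriv v) D r := hF.congr_of_eventuallyEq <|
    eventually_of_mem (Ioo_mem_nhds hr.1 hr.2) fun x hx => (hderiv x hx).deriv
  exact ⟨(hderiv r hr).deriv ▸ cauchyRHS_pos hC hτ0 hg_mono hg_pos hv_mono hr.1,
    hdd.differentiableAt, hdd.deriv ▸ hD⟩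
end

section
/- Let g : ℝ → ℝ be continuous, non-decreasing and everywhere positive, let C > 0, q ≥ 0, θ > 0 and τ > qθ be constants, let R ∈ (0,∞], and let v : [0,R) → ℝ solve the Cauchy problem (★) with v(0) = a. Then the limit as r → 0⁺ of v''(r) / r^{(τ − θ(q+1))/θ} equals C · (1/θ − q/τ) · τ^{1 − 1/θ} · g(a)^{1/θ}. In particular, if τ > θ(q+1) then v''(r) → 0 as r → 0⁺, and if τ = θ(q+1) then v''(r) → C · (g(a)/τ)^{1/θ} as r → 0⁺. -/
/-!
Put `F(r) = ∫₀ʳ s^{τ-1} g(v s) ds` and `u(r) = F(r) / r^τ`. Since `F' = r^{τ-1} g(v r)` and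
`g ∘ v` is continuous at `0`, l'Hôpital's rule gives `u(r) → g(a)/τ`. Differentiating
`v' = C r^{-q} F^{1/θ}` once more, both terms of `v''` carry the factor `r^{(τ-θ(q+1))/θ}`, and
the quotient is `C (-q u^{1/θ} + θ⁻¹ u^{1/θ-1} g(v r))`, whose limit is the stated constant.
The two special cases follow by multiplying with `r^{(τ-θ(q+1))/θ} → 0`, resp. because the
exponent vanishes.
-/

open Real MeasureTheory Set Filter Topology ENNReal

theorem tendsto_rpow_nhdsGT_zero {p : ℝ} (hp : 0 < p) :
    Tendsto (fun r : ℝ => r ^ p) (𝓝[>] 0) (𝓝 0) := by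
  have h := (Real.continuousAt_rpow_const 0 p (Or.inr hp.le)).tendsto
  rw [Real.zero_rpow hp.ne'] at h
  exact h.mono_left nhdsWithin_le_nhds

theorem tendsto_nhds_zero_of_tendsto_div_rpow {f : ℝ → ℝ} {p L : ℝ} (hp : 0 < p)
    (hf : Tendsto (fun r => f r / r ^ p) (𝓝[>] 0) (𝓝 L)) :
    Tendsto f (𝓝[>] 0) (𝓝 0) := by
  have h := hf.mul (tendsto_rpow_nhdsGT_zero hp)
  rw [mul_zero] at h
  refine h.congr' ?_
  filter_upwards [self_mem_nhdsWithin] with r (hr : 0 < r)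
  exact div_mul_cancel₀ _ (Real.rpow_pos_of_pos hr p).ne'

theorem ContinuousOn.tendsto_nhdsGT_of_Icc {h : ℝ → ℝ} {δ : ℝ} (hδ : 0 < δ)
    (hh : ContinuousOn h (Icc 0 δ)) : Tendsto h (𝓝[>] 0) (𝓝 (h 0)) :=
  ((hh 0 ⟨le_rfl, hδ.le⟩).mono_of_mem_nhdsWithin (Icc_mem_nhdsGE hδ)).mono Ioi_subset_Ici_self

theorem mul_div_rpow_eq_rpow_one_sub_mul {τ G : ℝ} (hτ : 0 < τ) (hG : 0 ≤ G) (p : ℝ) :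
    τ * (G / τ) ^ p = τ ^ (1 - p) * G ^ p := by
  rw [Real.div_rpow hG hτ.le, Real.rpow_sub hτ, Real.rpow_one]
  field_simp

section WeightedPrimitive

variable {τ δ r : ℝ} {h : ℝ → ℝ}

theorem intervalIntegrable_rpow_sub_one_mul (hτ : 0 < τ) (hh : ContinuousOn h (Icc 0 δ))
    (hr : r ∈ Icc 0 δ) : IntervalIntegrable (fun s => s ^ (τ - 1) * h s) volume 0 r := by
  refine (intervalIntegral.intervalIntegrable_rpow' (by linarith)).mul_continuousOn ?_
  rw [uIcc_of_le hr.1]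
  exact hh.mono (Icc_subset_Icc le_rfl hr.2)

theorem hasDerivAt_integral_rpow_sub_one_mul (hτ : 0 < τ) (hh : ContinuousOn h (Icc 0 δ))
    (hr : r ∈ Ioo 0 δ) :
    HasDerivAt (fun x => ∫ s in (0:ℝ)..x, s ^ (τ - 1) * h s) (r ^ (τ - 1) * h r) r := by
  have hcont : ContinuousOn (fun s => s ^ (τ - 1) * h s) (Ioo 0 δ) := fun x hx =>
    ((Real.continuousAt_rpow_const x _ (Or.inl hx.1.ne')).mul
      (hh.continuousAt (Icc_mem_nhds hx.1 hx.2))).continuousWithinAt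
  exact intervalIntegral.integral_hasDerivAt_right
    (intervalIntegrable_rpow_sub_one_mul hτ hh (Ioo_subset_Icc_self hr))
    (hcont.stronglyMeasurableAtFilter isOpen_Ioo r hr)
    (hcont.continuousAt (isOpen_Ioo.mem_nhds hr))

theorem integral_rpow_sub_one_mul_pos (hτ : 0 < τ) (hh : ContinuousOn h (Icc 0 δ))
    (hpos : ∀ s, 0 < h s) (hr : r ∈ Ioc 0 δ) :
    0 < ∫ s in (0:ℝ)..r, s ^ (τ - 1) * h s :=
  intervalIntegral.intervalIntegral_pos_of_pos_on
    (intervalIntegrable_rpow_sub_one_mul hτ hh (Ioc_subset_Icc_self hr))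
    (fun s hs => mul_pos (Real.rpow_pos_of_pos hs.1 _) (hpos s)) hr.1

theorem tendsto_integral_rpow_sub_one_mul_nhdsGT_zero (hτ : 0 < τ) (hδ : 0 < δ)
    (hh : ContinuousOn h (Icc 0 δ)) :
    Tendsto (fun x => ∫ s in (0:ℝ)..x, s ^ (τ - 1) * h s) (𝓝[>] 0) (𝓝 0) := by
  have hF : ContinuousOn (fun x => ∫ s in (0:ℝ)..x, s ^ (τ - 1) * h s) (Icc 0 δ) := by
    rw [← uIcc_of_le hδ.le]
    exact intervalIntegral.continuousOn_primitive_interval'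
      (intervalIntegrable_rpow_sub_one_mul hτ hh ⟨hδ.le, le_rfl⟩) left_mem_uIcc
  simpa using hF.tendsto_nhdsGT_of_Icc hδ

theorem tendsto_integral_rpow_sub_one_mul_div_rpow (hτ : 0 < τ) (hδ : 0 < δ)
    (hh : ContinuousOn h (Icc 0 δ)) :
    Tendsto (fun x => (∫ s in (0:ℝ)..x, s ^ (τ - 1) * h s) / x ^ τ) (𝓝[>] 0)
      (𝓝 (h 0 / τ)) := by
  refine HasDerivAt.lhopital_zero_right_on_Ioo hδ
    (fun x hx => hasDerivAt_integral_rpow_sub_one_mul hτ hh hx)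
    (fun x hx => Real.hasDerivAt_rpow_const (Or.inl hx.1.ne'))
    (fun x hx => (mul_pos hτ (Real.rpow_pos_of_pos hx.1 _)).ne')
    (tendsto_integral_rpow_sub_one_mul_nhdsGT_zero hτ hδ hh) (tendsto_rpow_nhdsGT_zero hτ) ?_
  refine ((hh.tendsto_nhdsGT_of_Icc hδ).div_const τ).congr' ?_
  filter_upwards [self_mem_nhdsWithin] with x (hx : 0 < x)
  have : x ^ (τ - 1) ≠ 0 := (Real.rpow_pos_of_pos hx _).ne'
  field_simp

end WeightedPrimitive

theorem cauchyRHS_deriv_div_rpow_eq {C q τ θ r F x : ℝ} (hθ : θ ≠ 0) (hr : 0 < r) (hF : 0 ≤ F) :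
    (C * (-q * r ^ (-q - 1)) * F ^ (1 / θ) +
        C * r ^ (-q) * (r ^ (τ - 1) * x * (1 / θ) * F ^ (1 / θ - 1))) /
      r ^ ((τ - θ * (q + 1)) / θ) =
    C * (-q * (F / r ^ τ) ^ (1 / θ) + 1 / θ * (F / r ^ τ) ^ (1 / θ - 1) * x) := by
  have hrτ : 0 < r ^ τ := Real.rpow_pos_of_pos hr τ
  set u := F / r ^ τ
  have hFu : F = u * r ^ τ := (div_mul_cancel₀ F hrτ.ne').symm
  have hu : 0 ≤ u := div_nonneg hF hrτ.le
  have hpow (p : ℝ) : F ^ p = u ^ p * r ^ (τ * p) := by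
    rw [hFu, Real.mul_rpow hu hrτ.le, Real.rpow_mul hr.le]
  have e1 : r ^ (-q - 1) * r ^ (τ * (1 / θ)) = r ^ ((τ - θ * (q + 1)) / θ) := by
    rw [← Real.rpow_add hr]; congr 1; field_simp; ring
  have e2 : r ^ (-q) * (r ^ (τ - 1) * r ^ (τ * (1 / θ - 1))) = r ^ ((τ - θ * (q + 1)) / θ) := by
    rw [← Real.rpow_add hr, ← Real.rpow_add hr]; congr 1; field_simp; ring
  rw [hpow, hpow, div_eq_iff (Real.rpow_pos_of_pos hr _).ne']
  linear_combination (C * (-q) * u ^ (1 / θ)) * e1 + (C * (1 / θ) * u ^ (1 / θ - 1) * x) * e2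

namespace SolvesCauchy

variable {C q τ θ a : ℝ} {g : ℝ → ℝ} {R : ℝ≥0∞} {v : ℝ → ℝ} {δ r : ℝ}

theorem continuousOn_Icc (hv : SolvesCauchy C q τ θ a g R v) (hδ : ENNReal.ofReal δ < R) :
    ContinuousOn v (Icc 0 δ) :=
  hv.1.mono fun _ hr => ⟨hr.1, (ENNReal.ofReal_le_ofReal hr.2).trans_lt hδ⟩

theorem hasDerivAt_of_mem_Ioo (hv : SolvesCauchy C q τ θ a g R v) (hδ : ENNReal.ofReal δ < R)
    (hr : r ∈ Ioo 0 δ) : HasDerivAt v (cauchyRHS C q τ θ g v r) r :=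
  hv.2.2 r hr.1 ((ENNReal.ofReal_le_ofReal hr.2.le).trans_lt hδ)

theorem hasDerivAt_deriv (hv : SolvesCauchy C q τ θ a g R v) (hg : Continuous g)
    (hg_pos : ∀ t, 0 < g t) (hτ : 0 < τ) (hδ : ENNReal.ofReal δ < R) (hr : r ∈ Ioo 0 δ) :
    HasDerivAt (deriv v)
      (C * (-q * r ^ (-q - 1)) * (∫ s in (0:ℝ)..r, s ^ (τ - 1) * g (v s)) ^ (1 / θ) +
        C * r ^ (-q) * (r ^ (τ - 1) * g (v r) * (1 / θ) *
          (∫ s in (0:ℝ)..r, s ^ (τ - 1) * g (v s)) ^ (1 / θ - 1))) r := by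
  have hgv := hg.comp_continuousOn (hv.continuousOn_Icc hδ)
  have hF := hasDerivAt_integral_rpow_sub_one_mul hτ hgv hr
  have hrhs : HasDerivAt (cauchyRHS C q τ θ g v) _ r :=
    ((Real.hasDerivAt_rpow_const (p := -q) (Or.inl hr.1.ne')).const_mul C).mul
      (hF.rpow_const (Or.inl (integral_rpow_sub_one_mul_pos hτ hgv (fun _ => hg_pos _)
        (Ioo_subset_Ioc_self hr)).ne'))
  refine hrhs.congr_of_eventuallyEq ?_
  filter_upwards [isOpen_Ioo.mem_nhds hr] with x hx using (hv.hasDerivAt_of_mem_Ioo hδ hx).deriv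

theorem tendsto_deriv_deriv_div_rpow (hv : SolvesCauchy C q τ θ a g R v) (hg : Continuous g)
    (hg_pos : ∀ t, 0 < g t) (hθ : θ ≠ 0) (hτ : 0 < τ) (hR : 0 < R) :
    Tendsto (fun r => deriv (deriv v) r / r ^ ((τ - θ * (q + 1)) / θ)) (𝓝[>] 0)
      (𝓝 (C * (1 / θ - q / τ) * τ ^ (1 - 1 / θ) * g a ^ (1 / θ))) := by
  obtain ⟨δ, -, hδ0, hδ⟩ := ENNReal.lt_iff_exists_real_btwn.1 hR
  have hδ0 : 0 < δ := ENNReal.ofReal_pos.1 hδ0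
  have hgv := hg.comp_continuousOn (hv.continuousOn_Icc hδ)
  have hga : 0 < g a := hg_pos a
  have hu := tendsto_integral_rpow_sub_one_mul_div_rpow hτ hδ0 hgv
  simp only [Function.comp_apply, hv.2.1] at hu
  have hupow (p : ℝ) :=
    (Real.continuousAt_rpow_const _ p (Or.inl (div_pos hga hτ).ne')).tendsto.comp hu
  have hlim := (((hupow (1 / θ)).const_mul (-q)).add
      (((hupow (1 / θ - 1)).const_mul (1 / θ)).mul (hgv.tendsto_nhdsGT_of_Icc hδ0))).const_mul C
  have hval : -q * (g a / τ) ^ (1 / θ) + 1 / θ * (g a / τ) ^ (1 / θ - 1) * g a =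
      (1 / θ - q / τ) * τ ^ (1 - 1 / θ) * g a ^ (1 / θ) := by
    rw [Real.rpow_sub_one (div_pos hga hτ).ne', mul_assoc (1 / θ - q / τ),
      ← mul_div_rpow_eq_rpow_one_sub_mul hτ hga.le]
    field_simp
    ring
  simp only [Function.comp_apply, hv.2.1, hval, ← mul_assoc] at hlim
  refine hlim.congr' ?_
  filter_upwards [Ioo_mem_nhdsGT hδ0] with r hr
  have hF : 0 < ∫ s in (0:ℝ)..r, s ^ (τ - 1) * g (v s) :=
    integral_rpow_sub_one_mul_pos hτ hgv (fun _ => hg_pos _) (Ioo_subset_Ioc_self hr)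
  rw [(hv.hasDerivAt_deriv hg hg_pos hτ hδ hr).deriv, cauchyRHS_deriv_div_rpow_eq hθ hr.1 hF.le]

end SolvesCauchy

theorem second_deriv_asymptotics_general
    (g : ℝ → ℝ) (hg_cont : Continuous g) (hg_pos : ∀ t, 0 < g t)
    (C q θ τ a : ℝ) (hq : 0 ≤ q) (hθ : 0 < θ) (hτ : q * θ < τ)
    (R : ℝ≥0∞) (hR : 0 < R) (v : ℝ → ℝ)
    (hv : SolvesCauchy C q τ θ a g R v) :
    Tendsto (fun r => deriv (deriv v) r / r ^ ((τ - θ * (q + 1)) / θ)) (𝓝[>] 0)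
      (𝓝 (C * (1 / θ - q / τ) * τ ^ (1 - 1 / θ) * g a ^ (1 / θ))) ∧
    (θ * (q + 1) < τ → Tendsto (fun r => deriv (deriv v) r) (𝓝[>] 0) (𝓝 0)) ∧
    (τ = θ * (q + 1) → Tendsto (fun r => deriv (deriv v) r) (𝓝[>] 0)
      (𝓝 (C * (g a / τ) ^ (1 / θ)))) := by
  have hτ0 : 0 < τ := (mul_nonneg hq hθ.le).trans_lt hτ
  have main := hv.tendsto_deriv_deriv_div_rpow hg_cont hg_pos hθ.ne' hτ0 hR
  refine ⟨main, fun hlt => tendsto_nhds_zero_of_tendsto_div_rpow ?_ main, fun heq => ?_⟩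
  · exact div_pos (by linarith) hθ
  · have hexp : (τ - θ * (q + 1)) / θ = 0 := by rw [heq, sub_self, zero_div]
    have hcoeff : 1 / θ - q / τ = 1 / τ := by rw [heq]; field_simp; ring
    rw [hexp, hcoeff] at main
    simp only [Real.rpow_zero, div_one, mul_assoc] at main
    rwa [← mul_div_rpow_eq_rpow_one_sub_mul hτ0 (hg_pos a).le, one_div τ,
      inv_mul_cancel_left₀ hτ0.ne'] at main

/-- Asymptotics of `v''` near the origin (underlying cases (i), (ii) of
Theorems 1.1 and 1.2): `v''(r)/r^{(τ-θ(q+1))/θ} → C(1/θ - q/τ)τ^{1-1/θ} g(a)^{1/θ}`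
as `r → 0⁺`; in particular `v''(r) → 0` if `τ > θ(q+1)` and
`v''(r) → C (g(a)/τ)^{1/θ}` if `τ = θ(q+1)`. -/
theorem second_deriv_asymptotics
    (g : ℝ → ℝ) (hg_cont : Continuous g) (hg_mono : Monotone g) (hg_pos : ∀ t, 0 < g t)
    (C q θ τ a : ℝ) (hC : 0 < C) (hq : 0 ≤ q) (hθ : 0 < θ) (hτ : q * θ < τ)
    (R : ℝ≥0∞) (hR : 0 < R) (v : ℝ → ℝ)
    (hv : SolvesCauchy C q τ θ a g R v) :
    Tendsto (fun r => deriv (deriv v) r / r ^ ((τ - θ * (q + 1)) / θ)) (𝓝[>] 0)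
      (𝓝 (C * (1 / θ - q / τ) * τ ^ (1 - 1 / θ) * g a ^ (1 / θ))) ∧
    (θ * (q + 1) < τ → Tendsto (fun r => deriv (deriv v) r) (𝓝[>] 0) (𝓝 0)) ∧
    (τ = θ * (q + 1) → Tendsto (fun r => deriv (deriv v) r) (𝓝[>] 0)
      (𝓝 (C * (g a / τ) ^ (1 / θ)))) :=
  second_deriv_asymptotics_general g hg_cont hg_pos C q θ τ a hq hθ hτ R hR v hv
end

section
/- Let g : ℝ → ℝ be continuous, non-decreasing and everywhere positive, and let C > 0, q ≥ 0, θ > 0 and τ ≥ θq + 1 be constants. Suppose for some a ∈ ℝ there exists v : [0,∞) → ℝ solving the Cauchy problem (★) on all of [0,∞) with v(0) = a and with right derivative v'(0) = 0 at the origin. Then the Keller–Osserman condition holds: ∫_b^∞ (∫_0^t g(s) ds)^{-1/(θ+1)} dt = +∞ for every b > 0. -/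
open Real MeasureTheory Set Filter Topology ENNReal

/-!
Write `G = ∫₀ g` and `w(r) = ∫₀^r s^{τ-1} g(v(s)) ds`, so that `v' = C r^{-q} w^{1/θ}`.
Since `w(r) ≥ g(a) r^τ / τ` and `τ/θ - q > 0`, we get `v' → ∞`, hence `v(R)/R → ∞` and
`G(v(R))/R → ∞`.

For `R₀ > 0` the function `C w^{(θ+1)/θ} - (θ+1)/θ · R₀^{τ-1+q} G(v)` is non-decreasing on
`[R₀, ∞)`. For `R₀ ≥ 1` and `R₀ ≤ r ≤ 4R₀` this gives, using `τ ≥ θq + 1`,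
`v'(r)^{θ+1} ≥ c (G(v(r)) - G(v(R₀)))`. So if `G ∘ v` doubles between `R₀` and `2R₀`, then
`v' G(v)^{-1/(θ+1)} ≥ d` on `[2R₀, 4R₀]`, and the substitution `t = v(r)` yields
`∫_{v(2R₀)}^{v(4R₀)} G^{-1/(θ+1)} ≥ 2dR₀`. If (KO) failed at `b`, these integrals would be
bounded, so `G(v(2R₀)) < 2 G(v(R₀))` for all large `R₀`: `G(v(2^m))/2^m` is eventually
non-increasing, contradicting `G(v(R))/R → ∞`.
-/

lemma intervalIntegral_le_toReal_setLIntegral_Ioi {f : ℝ → ℝ} {b x y : ℝ}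
    (hfin : ∫⁻ t in Ioi b, ENNReal.ofReal (f t) ≠ ⊤) (hf : ContinuousOn f (Ioi b))
    (hf_nonneg : ∀ t ∈ Ioi b, 0 ≤ f t) (hbx : b ≤ x) (hxy : x ≤ y) :
    ∫ t in x..y, f t ≤ (∫⁻ t in Ioi b, ENNReal.ofReal (f t)).toReal := by
  have hsub : Ioc x y ⊆ Ioi b := fun t ht => hbx.trans_lt ht.1
  rw [intervalIntegral.integral_of_le hxy, integral_eq_lintegral_of_nonneg_ae]
  · exact ENNReal.toReal_mono hfin (lintegral_mono_set hsub)
  · exact (ae_restrict_iff' measurableSet_Ioc).2 (ae_of_all _ fun t ht => hf_nonneg t (hsub ht))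
  · exact (hf.mono hsub).aestronglyMeasurable measurableSet_Ioc

lemma tendsto_div_self_atTop_of_hasDerivAt {f f' : ℝ → ℝ}
    (hf : ∀ x, 0 < x → HasDerivAt f (f' x) x) (hf' : Tendsto f' atTop atTop) :
    Tendsto (fun x => f x / x) atTop atTop := by
  refine tendsto_atTop.2 fun M => ?_
  obtain ⟨x₀, hx₀⟩ :=
    eventually_atTop.1 ((hf'.eventually_ge_atTop (M + 1)).and (eventually_gt_atTop 0))
  have hx₀_pos : 0 < x₀ := (hx₀ x₀ le_rfl).2
  have hmono : MonotoneOn (fun x => f x - (M + 1) * x) (Ici x₀) := by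
    refine monotoneOn_of_hasDerivWithinAt_nonneg (f' := fun x => f' x - (M + 1))
      (convex_Ici x₀) ?_ (fun x hx => ?_) fun x hx => ?_
    · exact fun x hx => ((hf x (hx₀_pos.trans_le hx)).continuousAt.sub
        (continuousAt_id.const_mul _)).continuousWithinAt
    · rw [interior_Ici] at hx
      simpa using ((hf x (hx₀_pos.trans hx)).fun_sub
        ((hasDerivAt_id' x).const_mul (M + 1))).hasDerivWithinAt
    · rw [interior_Ici] at hx
      exact sub_nonneg.2 (hx₀ x hx.le).1
  filter_upwards [eventually_ge_atTop (max x₀ ((M + 1) * x₀ - f x₀))] with x hx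
  have hx_pos : 0 < x := hx₀_pos.trans_le (le_of_max_le_left hx)
  have hx_ge := hmono self_mem_Ici (le_of_max_le_left hx) (le_of_max_le_left hx)
  rw [le_div_iff₀ hx_pos]
  nlinarith [le_of_max_le_right hx]

lemma not_tendsto_div_two_pow_atTop {u : ℕ → ℝ} (hu : ∀ᶠ m in atTop, u (m + 1) ≤ 2 * u m) :
    ¬ Tendsto (fun m => u m / 2 ^ m) atTop atTop := by
  intro htop
  obtain ⟨K, hK⟩ := eventually_atTop.1 hu
  have hbound : ∀ m, K ≤ m → u m / 2 ^ m ≤ u K / 2 ^ K := by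
    refine Nat.le_induction le_rfl fun m hm ih => le_trans ?_ ih
    rw [pow_succ, div_le_div_iff₀ (by positivity) (by positivity)]
    nlinarith [hK m hm, pow_pos (two_pos : (0:ℝ) < 2) m]
  obtain ⟨m, hm⟩ :=
    ((htop.eventually_gt_atTop (u K / 2 ^ K)).and (eventually_ge_atTop K)).exists
  exact (hbound m hm.2).not_gt hm.1

lemma rpow_one_div_le_mul_rpow_neg {c x y p : ℝ} (hp : 0 < p) (hc : 0 ≤ c) (hx : 0 ≤ x)
    (hy : 0 < y) (h : c * y ≤ x ^ p) : c ^ (1 / p) ≤ x * y ^ (-(1 / p)) := by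
  have key : (c * y) ^ (1 / p) ≤ x := by
    simpa [one_div, rpow_rpow_inv hx hp.ne'] using
      rpow_le_rpow (by positivity) h (one_div_nonneg.2 hp.le)
  rw [rpow_neg hy.le, le_mul_inv_iff₀ (by positivity), ← mul_rpow hc hy.le]
  exact key

lemma four_rpow_le_rpow_mul_rpow {q θ τ R₀ r : ℝ} (hθ : 0 ≤ θ) (hq : 0 ≤ q)
    (hτ : θ * q + 1 ≤ τ) (hR₀ : 1 ≤ R₀) (hr : 0 < r) (hr₄ : r ≤ 4 * R₀) :
    (4 : ℝ) ^ (-(q * (θ + 1))) ≤ r ^ (-(q * (θ + 1))) * R₀ ^ (τ - 1 + q) := by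
  have hR₀_pos : 0 < R₀ := by linarith
  calc (4 : ℝ) ^ (-(q * (θ + 1))) ≤ 4 ^ (-(q * (θ + 1))) * R₀ ^ (τ - 1 - θ * q) :=
        le_mul_of_one_le_right (by positivity) (one_le_rpow hR₀ (by linarith))
    _ = (4 * R₀) ^ (-(q * (θ + 1))) * R₀ ^ (τ - 1 + q) := by
        rw [mul_rpow (by norm_num) hR₀_pos.le, mul_assoc, ← rpow_add hR₀_pos]
        congr 2
        ring
    _ ≤ r ^ (-(q * (θ + 1))) * R₀ ^ (τ - 1 + q) := by
        have he : -(q * (θ + 1)) ≤ 0 := neg_nonpos.2 (by positivity)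
        exact mul_le_mul_of_nonneg_right (rpow_le_rpow_of_nonpos hr hr₄ he) (by positivity)

noncomputable def primitive (g : ℝ → ℝ) (t : ℝ) : ℝ := ∫ s in (0:ℝ)..t, g s

section Primitive

variable {g : ℝ → ℝ}

lemma hasDerivAt_primitive (hg : Continuous g) (t : ℝ) : HasDerivAt (primitive g) (g t) t :=
  (hg.integral_hasStrictDerivAt 0 t).hasDerivAt

lemma continuous_primitive (hg : Continuous g) : Continuous (primitive g) :=
  continuous_iff_continuousAt.2 fun t => (hasDerivAt_primitive hg t).continuousAt

lemma strictMono_primitive (hg : Continuous g) (hg_pos : ∀ t, 0 < g t) :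
    StrictMono (primitive g) :=
  strictMono_of_hasDerivAt_pos (hasDerivAt_primitive hg) hg_pos

lemma primitive_pos (hg : Continuous g) (hg_pos : ∀ t, 0 < g t) {t : ℝ} (ht : 0 < t) :
    0 < primitive g t := by
  simpa [primitive] using strictMono_primitive hg hg_pos ht

lemma continuousOn_primitive_rpow (hg : Continuous g) (hg_pos : ∀ t, 0 < g t) (p : ℝ) :
    ContinuousOn (fun t => primitive g t ^ p) (Ioi 0) :=
  (continuous_primitive hg).continuousOn.rpow_const fun _ ht =>
    Or.inl (primitive_pos hg hg_pos ht).ne'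

lemma mul_le_primitive (hg : Monotone g) {t : ℝ} (ht : 0 ≤ t) : g 0 * t ≤ primitive g t := by
  have := intervalIntegral.integral_mono_on (μ := volume) ht intervalIntegrable_const
    hg.intervalIntegrable fun s hs => hg hs.1
  simpa [primitive, mul_comm] using this

lemma tendsto_primitive_comp_div_atTop (hg : Monotone g) (hg0 : 0 < g 0) {u : ℝ → ℝ}
    (hu : Tendsto (fun R => u R / R) atTop atTop) :
    Tendsto (fun R => primitive g (u R) / R) atTop atTop := by
  refine tendsto_atTop_mono' _ ?_ (hu.const_mul_atTop hg0)
  filter_upwards [eventually_gt_atTop 0, hu.eventually_ge_atTop 0] with R hR huR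
  rw [← mul_div_assoc]
  have huR' : 0 ≤ u R := by simpa [hR.ne'] using mul_nonneg huR hR.le
  exact div_le_div_of_nonneg_right (mul_le_primitive hg huR') hR.le

end Primitive

noncomputable def cauchyWeight (τ : ℝ) (g v : ℝ → ℝ) (r : ℝ) : ℝ :=
  ∫ s in (0:ℝ)..r, s ^ (τ - 1) * g (v s)

namespace SolvesCauchy

variable {C q τ θ a : ℝ} {g v : ℝ → ℝ}

lemma continuousOn_Ici (hv : SolvesCauchy C q τ θ a g ⊤ v) : ContinuousOn v (Ici 0) := by
  simpa [Ici] using hv.1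

lemma hasDerivAt (hv : SolvesCauchy C q τ θ a g ⊤ v) {r : ℝ} (hr : 0 < r) :
    HasDerivAt v (C * r ^ (-q) * cauchyWeight τ g v r ^ (1 / θ)) r :=
  hv.2.2 r hr ENNReal.ofReal_lt_top

lemma continuousOn_weight_integrand (hv : SolvesCauchy C q τ θ a g ⊤ v) (hg : Continuous g)
    (hτ : 1 ≤ τ) : ContinuousOn (fun s => s ^ (τ - 1) * g (v s)) (Ici 0) :=
  (continuous_rpow_const (by linarith)).continuousOn.mul
    (hg.comp_continuousOn hv.continuousOn_Ici)

lemma hasDerivAt_cauchyWeight (hv : SolvesCauchy C q τ θ a g ⊤ v) (hg : Continuous g)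
    (hτ : 1 ≤ τ) {r : ℝ} (hr : 0 < r) :
    HasDerivAt (cauchyWeight τ g v) (r ^ (τ - 1) * g (v r)) r := by
  have h := hv.continuousOn_weight_integrand hg hτ
  refine intervalIntegral.integral_hasDerivAt_right ?_
    ((h.mono (Ioi_subset_Ici le_rfl)).stronglyMeasurableAtFilter isOpen_Ioi r hr)
    ((h r hr.le).continuousAt (Ici_mem_nhds hr))
  exact (h.mono (by simp [uIcc_of_le hr.le, Icc_subset_Ici_self])).intervalIntegrable

lemma cauchyWeight_pos (hv : SolvesCauchy C q τ θ a g ⊤ v) (hg : Continuous g)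
    (hg_pos : ∀ t, 0 < g t) (hτ : 1 ≤ τ) {r : ℝ} (hr : 0 < r) : 0 < cauchyWeight τ g v r := by
  refine intervalIntegral.intervalIntegral_pos_of_pos_on ?_
    (fun s hs => mul_pos (rpow_pos_of_pos hs.1 _) (hg_pos _)) hr
  exact ((hv.continuousOn_weight_integrand hg hτ).mono
    (by simp [uIcc_of_le hr.le, Icc_subset_Ici_self])).intervalIntegrable

lemma deriv_pos (hv : SolvesCauchy C q τ θ a g ⊤ v) (hg : Continuous g)
    (hg_pos : ∀ t, 0 < g t) (hC : 0 < C) (hτ : 1 ≤ τ) {r : ℝ} (hr : 0 < r) :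
    0 < C * r ^ (-q) * cauchyWeight τ g v r ^ (1 / θ) := by
  have := hv.cauchyWeight_pos hg hg_pos hτ hr
  positivity

lemma strictMonoOn (hv : SolvesCauchy C q τ θ a g ⊤ v) (hg : Continuous g)
    (hg_pos : ∀ t, 0 < g t) (hC : 0 < C) (hτ : 1 ≤ τ) : StrictMonoOn v (Ici 0) := by
  refine strictMonoOn_of_hasDerivWithinAt_pos (convex_Ici 0) hv.continuousOn_Ici
    (f' := fun r => C * r ^ (-q) * cauchyWeight τ g v r ^ (1 / θ))
    (fun r hr => ?_) fun r hr => ?_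
  · rw [interior_Ici] at hr
    exact (hv.hasDerivAt hr).hasDerivWithinAt
  · rw [interior_Ici] at hr
    exact hv.deriv_pos hg hg_pos hC hτ hr

lemma mul_rpow_div_le_cauchyWeight (hv : SolvesCauchy C q τ θ a g ⊤ v) (hg : Continuous g)
    (hg_mono : Monotone g) (hg_pos : ∀ t, 0 < g t) (hC : 0 < C) (hτ : 1 ≤ τ) {r : ℝ}
    (hr : 0 ≤ r) : g a * (r ^ τ / τ) ≤ cauchyWeight τ g v r := by
  have hint : ∫ s in (0:ℝ)..r, g a * s ^ (τ - 1) = g a * (r ^ τ / τ) := by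
    rw [intervalIntegral.integral_const_mul, integral_rpow (Or.inl (by linarith)),
      zero_rpow (by linarith), sub_add_cancel, sub_zero]
  rw [← hint]
  refine intervalIntegral.integral_mono_on hr ?_ ?_ fun s hs => ?_
  · exact (continuous_const.mul (continuous_rpow_const (by linarith))).intervalIntegrable _ _
  · exact ((hv.continuousOn_weight_integrand hg hτ).mono
      (by simp [uIcc_of_le hr, Icc_subset_Ici_self])).intervalIntegrable
  · have hva : a ≤ v s := by
      rw [← hv.2.1]
      exact (hv.strictMonoOn hg hg_pos hC hτ).monotoneOn self_mem_Ici hs.1 hs.1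
    rw [mul_comm]
    exact mul_le_mul_of_nonneg_left (hg_mono hva) (rpow_nonneg hs.1 _)

lemma tendsto_deriv_atTop (hv : SolvesCauchy C q τ θ a g ⊤ v) (hg : Continuous g)
    (hg_mono : Monotone g) (hg_pos : ∀ t, 0 < g t) (hC : 0 < C) (hθ : 0 < θ) (hτ : 1 ≤ τ)
    (hτq : θ * q < τ) :
    Tendsto (fun r => C * r ^ (-q) * cauchyWeight τ g v r ^ (1 / θ)) atTop atTop := by
  have hexp : 0 < τ / θ - q := by rw [sub_pos, lt_div_iff₀ hθ]; linarith
  have hc : 0 < C * (g a / τ) ^ (1 / θ) := by have := hg_pos a; positivity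
  refine tendsto_atTop_mono' _ ?_ ((tendsto_rpow_atTop hexp).const_mul_atTop hc)
  filter_upwards [eventually_gt_atTop 0] with r hr
  have hw := rpow_le_rpow (by have := hg_pos a; positivity)
    (hv.mul_rpow_div_le_cauchyWeight hg hg_mono hg_pos hC hτ hr.le) (one_div_nonneg.2 hθ.le)
  calc C * (g a / τ) ^ (1 / θ) * r ^ (τ / θ - q)
      = C * r ^ (-q) * (g a * (r ^ τ / τ)) ^ (1 / θ) := by
        rw [show g a * (r ^ τ / τ) = g a / τ * r ^ τ by ring,
          mul_rpow (by have := hg_pos a; positivity) (rpow_nonneg hr.le _), ← rpow_mul hr.le,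
          mul_one_div, sub_eq_neg_add, rpow_add hr]
        ring
    _ ≤ C * r ^ (-q) * cauchyWeight τ g v r ^ (1 / θ) := by gcongr

lemma tendsto_div_self_atTop (hv : SolvesCauchy C q τ θ a g ⊤ v) (hg : Continuous g)
    (hg_mono : Monotone g) (hg_pos : ∀ t, 0 < g t) (hC : 0 < C) (hθ : 0 < θ) (hτ : 1 ≤ τ)
    (hτq : θ * q < τ) : Tendsto (fun r => v r / r) atTop atTop :=
  tendsto_div_self_atTop_of_hasDerivAt (fun _ hr => hv.hasDerivAt hr)
    (hv.tendsto_deriv_atTop hg hg_mono hg_pos hC hθ hτ hτq)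

lemma mul_sub_primitive_le_cauchyWeight_rpow (hv : SolvesCauchy C q τ θ a g ⊤ v)
    (hg : Continuous g) (hg_pos : ∀ t, 0 < g t) (hC : 0 < C) (hθ : 0 < θ) (hq : 0 ≤ q)
    (hτ : 1 ≤ τ) {R₀ r : ℝ} (hR₀ : 0 < R₀) (hr : R₀ ≤ r) :
    (θ + 1) / θ * R₀ ^ (τ - 1 + q) * (primitive g (v r) - primitive g (v R₀)) ≤
      C * cauchyWeight τ g v r ^ ((θ + 1) / θ) := by
  set w := cauchyWeight τ g v
  set k := (θ + 1) / θ * R₀ ^ (τ - 1 + q)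
  set Φ := fun x => C * w x ^ ((θ + 1) / θ) - k * primitive g (v x)
  set Φ' := fun x =>
    C * (x ^ (τ - 1) * g (v x) * ((θ + 1) / θ) * w x ^ ((θ + 1) / θ - 1)) -
      k * (g (v x) * (C * x ^ (-q) * w x ^ (1 / θ)))
  have hΦ : ∀ x, 0 < x → HasDerivAt Φ (Φ' x) x := fun x hx =>
    (((hv.hasDerivAt_cauchyWeight hg hτ hx).rpow_const (p := (θ + 1) / θ)
      (Or.inl (hv.cauchyWeight_pos hg hg_pos hτ hx).ne')).const_mul C).fun_sub
      (((hasDerivAt_primitive hg (v x)).comp x (hv.hasDerivAt hx)).const_mul k)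
  have hΦ_mono : MonotoneOn Φ (Ici R₀) := by
    refine monotoneOn_of_hasDerivWithinAt_nonneg (f' := Φ') (convex_Ici R₀)
      (fun x hx => (hΦ x (hR₀.trans_le hx)).continuousAt.continuousWithinAt)
      (fun x hx => ?_) fun x hx => ?_
    · rw [interior_Ici] at hx
      exact (hΦ x (hR₀.trans hx)).hasDerivWithinAt
    · rw [interior_Ici] at hx
      have hx₀ : 0 < x := hR₀.trans hx
      have hw := hv.cauchyWeight_pos hg hg_pos hτ hx₀
      have hpow : R₀ ^ (τ - 1 + q) * x ^ (-q) ≤ x ^ (τ - 1) := by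
        calc R₀ ^ (τ - 1 + q) * x ^ (-q) ≤ x ^ (τ - 1 + q) * x ^ (-q) :=
              mul_le_mul_of_nonneg_right (rpow_le_rpow hR₀.le hx.le (by linarith))
                (rpow_nonneg hx₀.le _)
          _ = x ^ (τ - 1) := by rw [← rpow_add hx₀]; congr 1; ring
      have hsplit : (θ + 1) / θ - 1 = 1 / θ := by field_simp; ring
      have hΦ'x : Φ' x = (θ + 1) / θ * C * g (v x) * w x ^ (1 / θ) *
          (x ^ (τ - 1) - R₀ ^ (τ - 1 + q) * x ^ (-q)) := by
        simp only [Φ', k, hsplit]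
        ring
      have := hg_pos (v x)
      rw [hΦ'x]
      exact mul_nonneg (by positivity) (sub_nonneg.2 hpow)
  have hR₀r := hΦ_mono self_mem_Ici hr hr
  have hw₀ : 0 ≤ C * w R₀ ^ ((θ + 1) / θ) := by
    have := (hv.cauchyWeight_pos hg hg_pos hτ hR₀).le
    positivity
  simp only [Φ] at hR₀r
  linarith

lemma exists_le_deriv_mul_primitive_rpow_of_doubling (hv : SolvesCauchy C q τ θ a g ⊤ v)
    (hg : Continuous g) (hg_pos : ∀ t, 0 < g t) (hC : 0 < C) (hθ : 0 < θ) (hq : 0 ≤ q)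
    (hτ : θ * q + 1 ≤ τ) :
    ∃ d > 0, ∀ R₀ r, 1 ≤ R₀ → 2 * R₀ ≤ r → r ≤ 4 * R₀ → 0 < v (2 * R₀) →
      2 * primitive g (v R₀) ≤ primitive g (v (2 * R₀)) →
      d ≤ C * r ^ (-q) * cauchyWeight τ g v r ^ (1 / θ) *
        primitive g (v r) ^ (-(1 / (θ + 1))) := by
  have hτ₁ : 1 ≤ τ := by nlinarith
  set e := q * (θ + 1)
  set c := C ^ θ * ((θ + 1) / θ) / 2 * 4 ^ (-e)
  refine ⟨c ^ (1 / (θ + 1)), by positivity, fun R₀ r hR₀ hr₂ hr₄ hv₂ hdouble => ?_⟩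
  have hR₀_pos : 0 < R₀ := by linarith
  have hr : 0 < r := by linarith
  set G := primitive g
  set w := cauchyWeight τ g v r
  have hv₂r : v (2 * R₀) ≤ v r := (hv.strictMonoOn hg hg_pos hC hτ₁).monotoneOn
    (mem_Ici.2 (by linarith)) (mem_Ici.2 hr.le) hr₂
  have hG₂r : G (v (2 * R₀)) ≤ G (v r) := (strictMono_primitive hg hg_pos).monotone hv₂r
  have hGr : 0 < G (v r) := primitive_pos hg hg_pos (hv₂.trans_le hv₂r)
  have hw : 0 < w := hv.cauchyWeight_pos hg hg_pos hτ₁ hr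
  have hcmp := hv.mul_sub_primitive_le_cauchyWeight_rpow hg hg_pos hC hθ hq hτ₁ hR₀_pos
    (by linarith : R₀ ≤ r)
  have hscale := four_rpow_le_rpow_mul_rpow hθ.le hq hτ hR₀ hr hr₄
  have hpow : (C * r ^ (-q) * w ^ (1 / θ)) ^ (θ + 1) =
      C ^ θ * r ^ (-e) * (C * w ^ ((θ + 1) / θ)) := by
    rw [mul_rpow (by positivity) (by positivity), mul_rpow hC.le (by positivity),
      ← rpow_mul hr.le, ← rpow_mul hw.le, rpow_add_one hC.ne', show -q * (θ + 1) = -e by ring,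
      show 1 / θ * (θ + 1) = (θ + 1) / θ by ring]
    ring
  refine rpow_one_div_le_mul_rpow_neg (by linarith) (by positivity) (by positivity) hGr ?_
  rw [hpow]
  calc c * G (v r) = C ^ θ * ((θ + 1) / θ) * 4 ^ (-e) * (G (v r) / 2) := by ring
    _ ≤ C ^ θ * ((θ + 1) / θ) * (r ^ (-e) * R₀ ^ (τ - 1 + q)) * (G (v r) - G (v R₀)) := by
        gcongr
        linarith
    _ = C ^ θ * r ^ (-e) * ((θ + 1) / θ * R₀ ^ (τ - 1 + q) * (G (v r) - G (v R₀))) := by ring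
    _ ≤ C ^ θ * r ^ (-e) * (C * w ^ ((θ + 1) / θ)) := by gcongr

lemma exists_mul_le_integral_of_doubling (hv : SolvesCauchy C q τ θ a g ⊤ v)
    (hg : Continuous g) (hg_pos : ∀ t, 0 < g t) (hC : 0 < C) (hθ : 0 < θ) (hq : 0 ≤ q)
    (hτ : θ * q + 1 ≤ τ) :
    ∃ d > 0, ∀ R₀, 1 ≤ R₀ → 0 < v (2 * R₀) →
      2 * primitive g (v R₀) ≤ primitive g (v (2 * R₀)) →
      2 * R₀ * d ≤ ∫ t in v (2 * R₀)..v (4 * R₀), primitive g t ^ (-(1 / (θ + 1))) := by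
  have hτ₁ : 1 ≤ τ := by nlinarith
  obtain ⟨d, hd, hle⟩ := hv.exists_le_deriv_mul_primitive_rpow_of_doubling hg hg_pos hC hθ hq hτ
  refine ⟨d, hd, fun R₀ hR₀ hv₂ hdouble => ?_⟩
  have hR : 2 * R₀ ≤ 4 * R₀ := by linarith
  have hI : uIcc (2 * R₀) (4 * R₀) = Icc (2 * R₀) (4 * R₀) := uIcc_of_le hR
  have hpos : ∀ r ∈ Icc (2 * R₀) (4 * R₀), 0 < r := fun r hr => by linarith [hr.1]
  have hv_cont : ContinuousOn v (Icc (2 * R₀) (4 * R₀)) :=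
    hv.continuousOn_Ici.mono fun r hr => (hpos r hr).le
  have hv_maps : MapsTo v (Icc (2 * R₀) (4 * R₀)) (Ioi 0) := fun r hr =>
    hv₂.trans_le ((hv.strictMonoOn hg hg_pos hC hτ₁).monotoneOn
      (mem_Ici.2 (by linarith)) (mem_Ici.2 (hpos r hr).le) hr.1)
  have hF := continuousOn_primitive_rpow hg hg_pos (-(1 / (θ + 1)))
  have hv'_cont : ContinuousOn (fun r => C * r ^ (-q) * cauchyWeight τ g v r ^ (1 / θ))
      (Icc (2 * R₀) (4 * R₀)) := fun r hr =>
    ((continuousAt_const.mul (continuousAt_rpow_const _ _ (Or.inl (hpos r hr).ne'))).mul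
      ((hv.hasDerivAt_cauchyWeight hg hτ₁ (hpos r hr)).continuousAt.rpow_const
        (Or.inl (hv.cauchyWeight_pos hg hg_pos hτ₁ (hpos r hr)).ne'))).continuousWithinAt
  rw [← intervalIntegral.integral_comp_mul_deriv'' (hI ▸ hv_cont)
    (fun r hr => (hv.hasDerivAt
      (hpos r (Ioo_subset_Icc_self (by simpa [hR] using hr)))).hasDerivWithinAt)
    (hI ▸ hv'_cont) (hF.mono (hI ▸ hv_maps.image_subset))]
  calc 2 * R₀ * d = ∫ _ in 2 * R₀..4 * R₀, d := by
        rw [intervalIntegral.integral_const, smul_eq_mul]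
        ring
    _ ≤ _ := by
      refine intervalIntegral.integral_mono_on hR intervalIntegrable_const ?_ fun r hr => ?_
      · exact ((hF.comp hv_cont hv_maps).mul hv'_cont).intervalIntegrable_of_Icc hR
      · rw [Function.comp_apply, mul_comm]
        exact hle R₀ r hR₀ hr.1 hr.2 hv₂ hdouble

lemma eventually_primitive_two_mul_le (hv : SolvesCauchy C q τ θ a g ⊤ v) (hg : Continuous g)
    (hg_mono : Monotone g) (hg_pos : ∀ t, 0 < g t) (hC : 0 < C) (hθ : 0 < θ) (hq : 0 ≤ q)
    (hτ : θ * q + 1 ≤ τ) {b : ℝ} (hb : 0 < b)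
    (hfin : ∫⁻ t in Ioi b, ENNReal.ofReal (primitive g t ^ (-(1 / (θ + 1)))) ≠ ⊤) :
    ∀ᶠ R₀ in atTop, primitive g (v (2 * R₀)) ≤ 2 * primitive g (v R₀) := by
  have hτ₁ : 1 ≤ τ := by nlinarith
  have hv_mono := (hv.strictMonoOn hg hg_pos hC hτ₁).monotoneOn
  obtain ⟨d, hd, hdouble⟩ := hv.exists_mul_le_integral_of_doubling hg hg_pos hC hθ hq hτ
  have hv_top : Tendsto v atTop atTop :=
    ((hv.tendsto_div_self_atTop hg hg_mono hg_pos hC hθ hτ₁ (by linarith)).atTop_mul_atTop₀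
      tendsto_id).congr' ((eventually_ne_atTop 0).mono fun R hR => div_mul_cancel₀ _ hR)
  filter_upwards [eventually_ge_atTop 1,
    eventually_gt_atTop ((∫⁻ t in Ioi b, ENNReal.ofReal (primitive g t ^ (-(1 / (θ + 1))))).toReal
      / (2 * d)),
    (hv_top.comp (tendsto_id.const_mul_atTop two_pos)).eventually_ge_atTop b]
    with R₀ hR₀ hL hb₂
  by_contra! hfast
  have hb₂' : b ≤ v (2 * R₀) := hb₂
  have hupper := intervalIntegral_le_toReal_setLIntegral_Ioi hfin
    ((continuousOn_primitive_rpow hg hg_pos _).mono (Ioi_subset_Ioi hb.le))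
    (fun t ht => rpow_nonneg (primitive_pos hg hg_pos (hb.trans ht)).le _) hb₂'
    (hv_mono (mem_Ici.2 (by linarith : (0:ℝ) ≤ 2 * R₀))
      (mem_Ici.2 (by linarith : (0:ℝ) ≤ 4 * R₀)) (by linarith))
  have hlower := hdouble R₀ hR₀ (hb.trans_le hb₂') hfast.le
  rw [div_lt_iff₀ (by positivity)] at hL
  linarith

end SolvesCauchy

theorem KO_of_entire_existence_general
    (g : ℝ → ℝ) (hg_cont : Continuous g) (hg_mono : Monotone g) (hg_pos : ∀ t, 0 < g t)
    (C q θ τ : ℝ) (hC : 0 < C) (hq : 0 ≤ q) (hθ : 0 < θ) (hτ : θ * q + 1 ≤ τ)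
    (a : ℝ) (v : ℝ → ℝ)
    (hv : SolvesCauchy C q τ θ a g ⊤ v) :
    KellerOsserman θ g := by
  intro b hb
  show ∫⁻ t in Ioi b, ENNReal.ofReal (primitive g t ^ (-(1 / (θ + 1)))) = ⊤
  by_contra hfin
  have hslow := hv.eventually_primitive_two_mul_le hg_cont hg_mono hg_pos hC hθ hq hτ hb hfin
  have hv_div := hv.tendsto_div_self_atTop hg_cont hg_mono hg_pos hC hθ (by nlinarith)
    (by linarith)
  have h2 : Tendsto (fun m : ℕ => (2 : ℝ) ^ m) atTop atTop :=
    tendsto_pow_atTop_atTop_of_one_lt (by norm_num)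
  refine not_tendsto_div_two_pow_atTop ?_
    ((tendsto_primitive_comp_div_atTop hg_mono (hg_pos 0) hv_div).comp h2)
  exact (h2.eventually hslow).mono fun m hm => by simpa [pow_succ'] using hm

/-- Necessity direction of Theorem 1.2: if `τ ≥ θq + 1` and for some `a` the Cauchy
problem (★) has an entire solution on `[0, ∞)` with right derivative `0` at the
origin, then the Keller–Osserman condition holds. -/
theorem KO_of_entire_existence
    (g : ℝ → ℝ) (hg_cont : Continuous g) (hg_mono : Monotone g) (hg_pos : ∀ t, 0 < g t)
    (C q θ τ : ℝ) (hC : 0 < C) (hq : 0 ≤ q) (hθ : 0 < θ) (hτ : θ * q + 1 ≤ τ)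
    (a : ℝ) (v : ℝ → ℝ)
    (hv : SolvesCauchy C q τ θ a g ⊤ v)
    (hv0 : HasDerivWithinAt v 0 (Set.Ici 0) 0) :
    KellerOsserman θ g :=
  KO_of_entire_existence_general g hg_cont hg_mono hg_pos C q θ τ hC hq hθ hτ a v hv
end

section
/- Let g : ℝ → ℝ be continuous, non-decreasing and everywhere positive, and let C > 0, q ≥ 0, θ > 0 and τ be constants with θq < τ < θq + 1. Suppose there exists ε ∈ (0, τ − θq) such that, with κ := (1 − ε)/(τ − θq − ε), the modified Keller–Osserman condition holds: ∫_b^∞ (∫_0^t g(s)^κ ds)^{-1/(κθ+1)} dt = +∞ for every b > 0. Then for every initial value a ≥ 0 there exists an entire solution v : [0,∞) → ℝ of the Cauchy problem (★): v is continuous on [0,∞) with v(0) = a, v is differentiable at 0 from the right with v'(0) = 0, for every r > 0 the derivative v'(r) exists and equals C · r^{-q} · (∫_0^r s^{τ-1} g(v(s)) ds)^{1/θ}, and v'(r) > 0 and v''(r) > 0 for all r > 0. -/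
open Real MeasureTheory Set Filter Topology ENNReal

/-!
The solution is the limit of the monotone iteration `v₀ = a`, `vₙ₊₁ = T vₙ`, where
`T v r = a + ∫₀^r ψ_v`, `ψ_v r = C r^{-q} A_v(r)^{1/θ}` is the right-hand side of (★) and
`A_v(r) = ∫₀^r s^{τ-1} g(v s) ds`. Since `g` is non-decreasing, `T` preserves the order, so the
iterates increase; once they are bounded, monotone convergence turns their limit into a fixed point
of `T`, i.e. an entire solution. Its second derivative is positive because `θq < τ` gives
`θ q A_v(r) < r^τ g(v r)`.

The iterates are bounded by a Keller–Osserman argument. Put `m = κθ + 1`, `G(x) = ∫ₐ^x g^κ` and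
`H(x) = ∫ₐ^x (1 + G)^{-1/m}`. From `ψ'/ψ ≤ A'/(θA)` and `A_v(s) ≤ g(v s) s^τ/τ` one gets, for
`κ ≥ 1`, `(ψ^m)' ≤ c s^{κ(τ-θq)-1} g(v s)^κ ψ`; if `v ≤ T v` and `κ(τ-θq) ≥ 1`, the right side is
at most `c r^{κ(τ-θq)-1} (G ∘ T v)'` on `(0, r]`. Integrating from `0` gives
`ψ ≤ K_r (1 + G(T v))^{1/m}` on `(0, r]`, that is `(H ∘ T v)' ≤ K_r`, so `H(T v r) ≤ K_r r`. The
modified Keller–Osserman condition makes `H` unbounded, so `T v r` stays below a level that depends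
on `r` only. The choice `κ = (1-ε)/(τ-θq-ε)` is what makes both `κ ≥ 1` and `κ(τ-θq) ≥ 1` hold.
-/

lemma le_of_tendsto_nhdsGT_of_hasDerivAt_nonneg {D D' : ℝ → ℝ} {a b L : ℝ} (hab : a < b)
    (hD : ∀ s ∈ Ioc a b, HasDerivAt D (D' s) s) (hD' : ∀ s ∈ Ioo a b, 0 ≤ D' s)
    (hL : Tendsto D (𝓝[>] a) (𝓝 L)) : L ≤ D b := by
  have hmono : MonotoneOn D (Ioc a b) := by
    refine monotoneOn_of_hasDerivWithinAt_nonneg (f' := D') (convex_Ioc a b)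
      (fun s hs => (hD s hs).continuousAt.continuousWithinAt) (fun s hs => ?_) (fun s hs => ?_)
    · rw [interior_Ioc] at hs ⊢
      exact (hD s (Ioo_subset_Ioc_self hs)).hasDerivWithinAt
    · rw [interior_Ioc] at hs
      exact hD' s hs
  refine le_of_tendsto hL ?_
  filter_upwards [Ioc_mem_nhdsGT hab] with s hs
  exact hmono hs (right_mem_Ioc.2 hab) hs.2

lemma not_integrableOn_Ioi_of_lintegral_eq_top {f h : ℝ → ℝ} {b c : ℝ}
    (hf : ∫⁻ t in Ioi b, ENNReal.ofReal (f t) = ⊤) (hfh : ∀ t ∈ Ioi b, f t ≤ c * h t) :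
    ¬ IntegrableOn h (Ioi b) := fun hh => by
  refine ((hh.const_mul c).lintegral_lt_top).ne (top_le_iff.1 ?_)
  rw [← hf]
  exact setLIntegral_mono' measurableSet_Ioi fun t ht => ENNReal.ofReal_le_ofReal (hfh t ht)

lemma exists_lt_integral_of_not_integrableOn_Ioi {h : ℝ → ℝ} {b : ℝ}
    (hc : ContinuousOn h (Ici b)) (h0 : ∀ t ∈ Ioi b, 0 ≤ h t)
    (hh : ¬ IntegrableOn h (Ioi b)) (K : ℝ) : ∃ x, b ≤ x ∧ K < ∫ t in b..x, h t := by
  by_contra! hK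
  refine hh (integrableOn_Ioi_of_intervalIntegral_norm_bounded K b
    (fun x => ((hc.mono Icc_subset_Ici_self).integrableOn_Icc).mono_set Ioc_subset_Icc_self)
    tendsto_id ?_)
  filter_upwards [eventually_ge_atTop b] with x hx
  rw [id_eq, intervalIntegral.integral_of_le hx, setIntegral_congr_fun measurableSet_Ioc
    fun t ht => Real.norm_of_nonneg (h0 t ht.1), ← intervalIntegral.integral_of_le hx]
  exact hK x hx

noncomputable section

structure CauchyData where
  g : ℝ → ℝ
  C : ℝ
  q : ℝ
  θ : ℝ
  τ : ℝ
  a : ℝ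
  continuous_g : Continuous g
  monotone_g : Monotone g
  g_pos : ∀ t, 0 < g t
  C_pos : 0 < C
  q_nonneg : 0 ≤ q
  θ_pos : 0 < θ
  θq_lt_τ : θ * q < τ

namespace CauchyData

open intervalIntegral

variable (S : CauchyData) {v w : ℝ → ℝ} {κ : ℝ}

/-! ### The Picard operator -/

-- Along a solution of (★), `S.flux v r = (r ^ q * v' r / C) ^ θ`.
def flux (v : ℝ → ℝ) (t : ℝ) : ℝ := ∫ s in (0:ℝ)..t, s ^ (S.τ - 1) * S.g (v s)

def rhs (v : ℝ → ℝ) : ℝ → ℝ := cauchyRHS S.C S.q S.τ S.θ S.g v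

def rhsDeriv (v : ℝ → ℝ) (s : ℝ) : ℝ :=
  S.rhs v s * (s ^ (S.τ - 1) * S.g (v s) / (S.θ * S.flux v s) - S.q / s)

def picard (v : ℝ → ℝ) (r : ℝ) : ℝ := S.a + ∫ t in (0:ℝ)..max r 0, S.rhs v t

lemma τ_pos : 0 < S.τ := (mul_nonneg S.θ_pos.le S.q_nonneg).trans_lt S.θq_lt_τ

lemma τ_div_θ_sub_q_pos : 0 < S.τ / S.θ - S.q :=
  sub_pos.2 ((lt_div_iff₀ S.θ_pos).2 (by linarith [S.θq_lt_τ]))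

lemma rhs_apply (v : ℝ → ℝ) (t : ℝ) :
    S.rhs v t = S.C * t ^ (-S.q) * S.flux v t ^ (1 / S.θ) := rfl

lemma integral_rpow_mul_const (c t : ℝ) :
    ∫ s in (0:ℝ)..t, s ^ (S.τ - 1) * c = c * t ^ S.τ / S.τ := by
  rw [intervalIntegral.integral_mul_const, integral_rpow (Or.inl (by linarith [S.τ_pos])),
    sub_add_cancel, zero_rpow S.τ_pos.ne']
  ring

lemma intervalIntegrable_fluxIntegrand (hv : Monotone v) {x : ℝ} (hx : 0 ≤ x) :
    IntervalIntegrable (fun s => s ^ (S.τ - 1) * S.g (v s)) volume 0 x := by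
  refine IntervalIntegrable.mono_fun' (g := fun s => s ^ (S.τ - 1) * S.g (v x))
    ((intervalIntegrable_rpow' (by linarith [S.τ_pos])).mul_const _)
    ((measurable_id.pow_const _).mul
      (S.continuous_g.measurable.comp hv.measurable)).aestronglyMeasurable ?_
  rw [uIoc_of_le hx]
  filter_upwards [ae_restrict_mem measurableSet_Ioc] with s hs
  have hs0 : 0 ≤ s ^ (S.τ - 1) := rpow_nonneg hs.1.le _
  rw [Real.norm_of_nonneg (mul_nonneg hs0 (S.g_pos _).le)]
  exact mul_le_mul_of_nonneg_left (S.monotone_g (hv hs.2)) hs0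

lemma flux_nonneg {t : ℝ} (ht : 0 ≤ t) : 0 ≤ S.flux v t :=
  integral_nonneg ht fun _ hs => mul_nonneg (rpow_nonneg hs.1 _) (S.g_pos _).le

lemma flux_pos (hv : Monotone v) {t : ℝ} (ht : 0 < t) : 0 < S.flux v t :=
  intervalIntegral_pos_of_pos_on (S.intervalIntegrable_fluxIntegrand hv ht.le)
    (fun _ hs => mul_pos (rpow_pos_of_pos hs.1 _) (S.g_pos _)) ht

lemma flux_le (hv : Monotone v) {t : ℝ} (ht : 0 ≤ t) :
    S.flux v t ≤ S.g (v t) * t ^ S.τ / S.τ := by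
  rw [← integral_rpow_mul_const]
  refine integral_mono_on ht (S.intervalIntegrable_fluxIntegrand hv ht)
    ((intervalIntegrable_rpow' (by linarith [S.τ_pos])).mul_const _) fun s hs => ?_
  exact mul_le_mul_of_nonneg_left (S.monotone_g (hv hs.2)) (rpow_nonneg hs.1 _)

lemma flux_le_flux (hv : Monotone v) (hw : Monotone w) (hvw : v ≤ w) {t : ℝ} (ht : 0 ≤ t) :
    S.flux v t ≤ S.flux w t :=
  integral_mono_on ht (S.intervalIntegrable_fluxIntegrand hv ht)
    (S.intervalIntegrable_fluxIntegrand hw ht)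
    fun s hs => mul_le_mul_of_nonneg_left (S.monotone_g (hvw s)) (rpow_nonneg hs.1 _)

lemma continuousAt_flux (hv : Monotone v) {t : ℝ} (ht : 0 < t) :
    ContinuousAt (S.flux v) t := by
  have h := continuousOn_primitive_interval'
    (S.intervalIntegrable_fluxIntegrand hv (by linarith : (0:ℝ) ≤ t + 1)) left_mem_uIcc
  rw [uIcc_of_le (by linarith)] at h
  exact h.continuousAt (Icc_mem_nhds ht (by linarith))

lemma hasDerivAt_flux (hv : Monotone v) {t : ℝ} (hvt : ContinuousAt v t) (ht : 0 < t) :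
    HasDerivAt (S.flux v) (t ^ (S.τ - 1) * S.g (v t)) t :=
  integral_hasDerivAt_right (S.intervalIntegrable_fluxIntegrand hv ht.le)
    ((measurable_id.pow_const _).mul (S.continuous_g.measurable.comp
      hv.measurable)).aestronglyMeasurable.stronglyMeasurableAtFilter
    ((continuousAt_id.rpow_const (Or.inl ht.ne')).mul (S.continuous_g.continuousAt.comp hvt))

lemma rhs_zero (v : ℝ → ℝ) : S.rhs v 0 = 0 := by
  rw [rhs_apply, flux, integral_same, zero_rpow (one_div_pos.2 S.θ_pos).ne', mul_zero]

lemma rhs_nonneg {t : ℝ} (ht : 0 ≤ t) : 0 ≤ S.rhs v t :=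
  mul_nonneg (mul_nonneg S.C_pos.le (rpow_nonneg ht _)) (rpow_nonneg (S.flux_nonneg ht) _)

lemma rhs_pos (hv : Monotone v) {t : ℝ} (ht : 0 < t) : 0 < S.rhs v t :=
  mul_pos (mul_pos S.C_pos (rpow_pos_of_pos ht _)) (rpow_pos_of_pos (S.flux_pos hv ht) _)

lemma rhs_le (hv : Monotone v) {t x : ℝ} (ht : 0 ≤ t) (htx : t ≤ x) :
    S.rhs v t ≤ S.C * (S.g (v x) / S.τ) ^ (1 / S.θ) * t ^ (S.τ / S.θ - S.q) := by
  rcases ht.eq_or_lt with rfl | ht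
  · rw [S.rhs_zero, zero_rpow S.τ_div_θ_sub_q_pos.ne', mul_zero]
  have hτ := S.τ_pos
  calc S.rhs v t ≤ S.C * t ^ (-S.q) * (S.g (v x) / S.τ * t ^ S.τ) ^ (1 / S.θ) := by
        refine mul_le_mul_of_nonneg_left (rpow_le_rpow (S.flux_nonneg ht.le) ?_
          (one_div_nonneg.2 S.θ_pos.le)) (mul_nonneg S.C_pos.le (rpow_nonneg ht.le _))
        refine (S.flux_le hv ht.le).trans ?_
        rw [div_mul_eq_mul_div]
        gcongr
        exact S.monotone_g (hv htx)
    _ = S.C * (S.g (v x) / S.τ) ^ (1 / S.θ) * t ^ (S.τ / S.θ - S.q) := by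
        rw [mul_rpow (div_nonneg (S.g_pos _).le hτ.le) (rpow_nonneg ht.le _),
          ← rpow_mul ht.le, sub_eq_neg_add, rpow_add ht, mul_one_div]
        ring

lemma continuousAt_rhs (hv : Monotone v) {t : ℝ} (ht : 0 < t) : ContinuousAt (S.rhs v) t :=
  (continuousAt_const.mul (continuousAt_id.rpow_const (Or.inl ht.ne'))).mul
    ((S.continuousAt_flux hv ht).rpow_const (Or.inl (S.flux_pos hv ht).ne'))

lemma continuousOn_rhs (hv : Monotone v) : ContinuousOn (S.rhs v) (Ioi 0) :=
  fun _ ht => (S.continuousAt_rhs hv ht).continuousWithinAt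

lemma intervalIntegrable_rhs (hv : Monotone v) {x : ℝ} (hx : 0 ≤ x) :
    IntervalIntegrable (S.rhs v) volume 0 x := by
  rw [intervalIntegrable_iff_integrableOn_Ioc_of_le hx]
  refine Integrable.mono' (g := fun _ => S.C * (S.g (v x) / S.τ) ^ (1 / S.θ) *
      x ^ (S.τ / S.θ - S.q)) (integrableOn_const measure_Ioc_lt_top.ne)
    (((S.continuousOn_rhs hv).mono fun _ ht => ht.1).aestronglyMeasurable measurableSet_Ioc) ?_
  filter_upwards [ae_restrict_mem measurableSet_Ioc] with t ht
  rw [Real.norm_of_nonneg (S.rhs_nonneg ht.1.le)]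
  refine (S.rhs_le hv ht.1.le ht.2).trans (mul_le_mul_of_nonneg_left ?_ ?_)
  · exact rpow_le_rpow ht.1.le ht.2 S.τ_div_θ_sub_q_pos.le
  · exact mul_nonneg S.C_pos.le (rpow_nonneg (div_nonneg (S.g_pos _).le S.τ_pos.le) _)

lemma tendsto_rhs_zero (hv : Monotone v) : Tendsto (S.rhs v) (𝓝[>] 0) (𝓝 0) := by
  set K := S.C * (S.g (v 1) / S.τ) ^ (1 / S.θ)
  have hK : Tendsto (fun t : ℝ => K * t ^ (S.τ / S.θ - S.q)) (𝓝[>] 0) (𝓝 0) := by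
    have h := ((continuousAt_id.rpow_const (x := (0:ℝ))
      (Or.inr S.τ_div_θ_sub_q_pos.le)).const_mul K).tendsto
    rw [id, zero_rpow S.τ_div_θ_sub_q_pos.ne', mul_zero] at h
    exact h.mono_left nhdsWithin_le_nhds
  refine tendsto_of_tendsto_of_tendsto_of_le_of_le' tendsto_const_nhds hK ?_ ?_
  · filter_upwards [self_mem_nhdsWithin] with t ht using S.rhs_nonneg (le_of_lt ht)
  · filter_upwards [Ioo_mem_nhdsGT one_pos] with t ht using S.rhs_le hv ht.1.le ht.2.le

lemma rhs_le_rhs (hv : Monotone v) (hw : Monotone w) (hvw : v ≤ w) {t : ℝ} (ht : 0 ≤ t) :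
    S.rhs v t ≤ S.rhs w t := by
  rw [rhs_apply, rhs_apply]
  have := S.C_pos
  have := S.θ_pos
  gcongr
  exacts [S.flux_nonneg ht, S.flux_le_flux hv hw hvw ht]

lemma hasDerivAt_rhs (hv : Monotone v) {s : ℝ} (hvs : ContinuousAt v s) (hs : 0 < s) :
    HasDerivAt (S.rhs v) (S.rhsDeriv v s) s := by
  have hA := S.flux_pos hv hs
  have h := ((hasDerivAt_rpow_const (p := -S.q) (Or.inl hs.ne')).mul
    ((S.hasDerivAt_flux hv hvs hs).rpow_const (p := 1 / S.θ) (Or.inl hA.ne'))).const_mul S.C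
  refine (h.congr_deriv ?_).congr_of_eventuallyEq (Eventually.of_forall fun y => ?_)
  · rw [rhsDeriv, rhs_apply, rpow_sub_one hs.ne', rpow_sub_one hA.ne']
    field_simp
    ring
  · rw [rhs_apply, mul_assoc]
    rfl

lemma rhsDeriv_le {s : ℝ} (hs : 0 < s) :
    S.rhsDeriv v s ≤ S.rhs v s * (s ^ (S.τ - 1) * S.g (v s) / (S.θ * S.flux v s)) :=
  mul_le_mul_of_nonneg_left (sub_le_self _ (div_nonneg S.q_nonneg hs.le)) (S.rhs_nonneg hs.le)

lemma rhsDeriv_pos (hv : Monotone v) {s : ℝ} (hs : 0 < s) : 0 < S.rhsDeriv v s := by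
  have hA := S.flux_pos hv hs
  have hG := mul_pos (S.g_pos (v s)) (rpow_pos_of_pos hs S.τ)
  have hθqA : S.θ * S.q * S.flux v s < S.g (v s) * s ^ S.τ :=
    calc S.θ * S.q * S.flux v s ≤ S.θ * S.q * (S.g (v s) * s ^ S.τ / S.τ) :=
          mul_le_mul_of_nonneg_left (S.flux_le hv hs.le) (mul_nonneg S.θ_pos.le S.q_nonneg)
      _ < S.g (v s) * s ^ S.τ := by
          rw [mul_div_assoc', div_lt_iff₀ S.τ_pos, mul_comm]
          exact mul_lt_mul_of_pos_left S.θq_lt_τ hG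
  have hs' : s ^ (S.τ - 1) * S.g (v s) * s = S.g (v s) * s ^ S.τ := by
    rw [rpow_sub_one hs.ne']
    field_simp
  refine mul_pos (S.rhs_pos hv hs) (sub_pos.2 ?_)
  rw [div_lt_div_iff₀ hs (mul_pos S.θ_pos hA), hs']
  linarith

lemma picard_of_nonneg (v : ℝ → ℝ) {r : ℝ} (hr : 0 ≤ r) :
    S.picard v r = S.a + ∫ t in (0:ℝ)..r, S.rhs v t := by
  rw [picard, max_eq_left hr]

lemma picard_of_nonpos (v : ℝ → ℝ) {r : ℝ} (hr : r ≤ 0) : S.picard v r = S.a := by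
  rw [picard, max_eq_right hr, integral_same, add_zero]

lemma hasDerivAt_picard (hv : Monotone v) {r : ℝ} (hr : 0 < r) :
    HasDerivAt (S.picard v) (S.rhs v r) r := by
  refine ((integral_hasDerivAt_right (S.intervalIntegrable_rhs hv hr.le)
    ((S.continuousOn_rhs hv).stronglyMeasurableAtFilter isOpen_Ioi r hr)
    (S.continuousAt_rhs hv hr)).const_add S.a).congr_of_eventuallyEq ?_
  filter_upwards [Ioi_mem_nhds hr] with y hy using S.picard_of_nonneg v (le_of_lt hy)

lemma hasDerivWithinAt_picard_zero (hv : Monotone v) :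
    HasDerivWithinAt (S.picard v) 0 (Ici 0) 0 := by
  have h := integral_hasDerivWithinAt_right (s := Ici 0) (t := Ioi 0)
    (S.intervalIntegrable_rhs hv le_rfl)
    ((S.continuousOn_rhs hv).stronglyMeasurableAtFilter_nhdsWithin measurableSet_Ioi 0)
    (by rw [ContinuousWithinAt, S.rhs_zero]; exact S.tendsto_rhs_zero hv)
  rw [S.rhs_zero] at h
  exact (h.const_add S.a).congr (fun y hy => S.picard_of_nonneg v hy)
    (S.picard_of_nonneg v le_rfl)

lemma continuousOn_picard (hv : Monotone v) : ContinuousOn (S.picard v) (Ici 0) := by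
  intro r hr
  rcases (mem_Ici.1 hr).eq_or_lt with rfl | hr
  · exact (S.hasDerivWithinAt_picard_zero hv).continuousWithinAt
  · exact (S.hasDerivAt_picard hv hr).continuousAt.continuousWithinAt

lemma tendsto_picard_nhdsGT_zero (hv : Monotone v) :
    Tendsto (S.picard v) (𝓝[>] 0) (𝓝 S.a) := by
  have h := (S.continuousOn_picard hv 0 self_mem_Ici).tendsto
  rw [S.picard_of_nonpos v le_rfl] at h
  exact h.mono_left (nhdsWithin_mono _ Ioi_subset_Ici_self)

lemma le_picard (v : ℝ → ℝ) (r : ℝ) : S.a ≤ S.picard v r :=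
  le_add_of_nonneg_right (integral_nonneg (le_max_right r 0) fun _ ht => S.rhs_nonneg ht.1)

lemma monotone_picard (hv : Monotone v) : Monotone (S.picard v) := fun r r' hrr' =>
  add_le_add_right (integral_mono_interval le_rfl (le_max_right r 0) (max_le_max hrr' le_rfl)
    (ae_restrict_of_forall_mem measurableSet_Ioc fun _ ht => S.rhs_nonneg ht.1.le)
    (S.intervalIntegrable_rhs hv (le_max_right r' 0))) _

lemma picard_le_picard (hv : Monotone v) (hw : Monotone w) (hvw : v ≤ w) :
    S.picard v ≤ S.picard w := fun r =>
  add_le_add_right (integral_mono_on (le_max_right r 0)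
    (S.intervalIntegrable_rhs hv (le_max_right r 0))
    (S.intervalIntegrable_rhs hw (le_max_right r 0)) fun _ ht => S.rhs_le_rhs hv hw hvw ht.1) _

/-! ### The Keller–Osserman integral -/

def potential (κ x : ℝ) : ℝ := ∫ s in S.a..x, S.g s ^ κ

-- The shift by `1` keeps the integrand bounded near `a` without changing its behaviour at `∞`.
def koIntegrand (κ t : ℝ) : ℝ := (1 + S.potential κ t) ^ (-(1 / (κ * S.θ + 1)))

def koIntegral (κ x : ℝ) : ℝ := ∫ t in S.a..x, S.koIntegrand κ t

lemma continuous_g_rpow (κ : ℝ) : Continuous fun s => S.g s ^ κ :=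
  S.continuous_g.rpow_const fun s => Or.inl (S.g_pos s).ne'

lemma hasDerivAt_potential (κ x : ℝ) : HasDerivAt (S.potential κ) (S.g x ^ κ) x :=
  ((S.continuous_g_rpow κ).integral_hasStrictDerivAt S.a x).hasDerivAt

lemma continuous_potential (κ : ℝ) : Continuous (S.potential κ) :=
  continuous_iff_continuousAt.2 fun x => (S.hasDerivAt_potential κ x).continuousAt

lemma potential_nonneg (κ : ℝ) {x : ℝ} (hx : S.a ≤ x) : 0 ≤ S.potential κ x :=
  integral_nonneg hx fun s _ => (rpow_pos_of_pos (S.g_pos s) κ).le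

lemma koIntegrand_pos (κ : ℝ) {t : ℝ} (ht : S.a ≤ t) : 0 < S.koIntegrand κ t :=
  rpow_pos_of_pos (by linarith [S.potential_nonneg κ ht]) _

lemma continuousAt_koIntegrand (κ : ℝ) {t : ℝ} (ht : S.a ≤ t) :
    ContinuousAt (S.koIntegrand κ) t :=
  ((S.continuous_potential κ).continuousAt.const_add 1).rpow_const
    (Or.inl (by linarith [S.potential_nonneg κ ht]))

lemma continuousOn_koIntegrand (κ : ℝ) : ContinuousOn (S.koIntegrand κ) (Ici S.a) :=
  fun _ ht => (S.continuousAt_koIntegrand κ ht).continuousWithinAt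

lemma intervalIntegrable_koIntegrand (κ : ℝ) {x y : ℝ} (hx : S.a ≤ x) (hy : S.a ≤ y) :
    IntervalIntegrable (S.koIntegrand κ) volume x y :=
  ((S.continuousOn_koIntegrand κ).mono fun _ ht => (le_min hx hy).trans ht.1).intervalIntegrable

lemma hasDerivAt_koIntegral (κ : ℝ) {x : ℝ} (hx : S.a ≤ x) :
    HasDerivAt (S.koIntegral κ) (S.koIntegrand κ x) x :=
  integral_hasDerivAt_right (S.intervalIntegrable_koIntegrand κ le_rfl hx)
    ((((S.continuous_potential κ).measurable.const_add 1).pow_const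
      _).aestronglyMeasurable.stronglyMeasurableAtFilter)
    (S.continuousAt_koIntegrand κ hx)

lemma monotoneOn_koIntegral (κ : ℝ) : MonotoneOn (S.koIntegral κ) (Ici S.a) :=
  monotoneOn_of_hasDerivWithinAt_nonneg (convex_Ici _)
    (fun x hx => (S.hasDerivAt_koIntegral κ hx).continuousAt.continuousWithinAt)
    (fun x hx => by
      rw [interior_Ici] at hx ⊢
      exact (S.hasDerivAt_koIntegral κ (le_of_lt hx)).hasDerivWithinAt)
    (fun x hx => by
      rw [interior_Ici] at hx
      exact (S.koIntegrand_pos κ (le_of_lt hx)).le)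

lemma exists_rpow_integral_le_koIntegrand (hκ : 0 ≤ κ) :
    ∃ b, 0 < b ∧ S.a ≤ b ∧ ∀ t ∈ Ioi b,
      (∫ s in (0:ℝ)..t, S.g s ^ κ) ^ (-(1 / (κ * S.θ + 1))) ≤
        2 ^ (1 / (κ * S.θ + 1)) * S.koIntegrand κ t := by
  set Φ : ℝ → ℝ := fun t => ∫ s in (0:ℝ)..t, S.g s ^ κ
  set e := 1 / (κ * S.θ + 1)
  have he : 0 < e := one_div_pos.2 (by nlinarith [S.θ_pos])
  have hΦ : ∀ t, Φ t = Φ S.a + S.potential κ t := fun t =>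
    (integral_add_adjacent_intervals ((S.continuous_g_rpow κ).intervalIntegrable _ _)
      ((S.continuous_g_rpow κ).intervalIntegrable _ _)).symm
  have hΦ_ge : ∀ t, 0 ≤ t → t * S.g 0 ^ κ ≤ Φ t := fun t ht => by
    have h := integral_mono_on ht (intervalIntegrable_const (μ := volume))
      ((S.continuous_g_rpow κ).intervalIntegrable 0 t)
      fun s hs => rpow_le_rpow (S.g_pos 0).le (S.monotone_g hs.1) hκ
    rwa [intervalIntegral.integral_const, sub_zero, smul_eq_mul] at h
  have hlarge : ∀ᶠ t in atTop, S.a ≤ t ∧ 0 < t ∧ 1 + |Φ S.a| ≤ Φ t := by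
    have h := (tendsto_id.atTop_mul_const (rpow_pos_of_pos (S.g_pos 0) κ)).eventually_ge_atTop
      (1 + |Φ S.a|)
    filter_upwards [eventually_ge_atTop S.a, eventually_gt_atTop 0, h] with t hat ht hΦt
    exact ⟨hat, ht, hΦt.trans (hΦ_ge t ht.le)⟩
  obtain ⟨b, hb⟩ := eventually_atTop.1 hlarge
  refine ⟨b, (hb b le_rfl).2.1, (hb b le_rfl).1, fun t ht => ?_⟩
  obtain ⟨hat, -, hΦt⟩ := hb t (le_of_lt ht)
  have h1 : 0 < 1 + S.potential κ t := by linarith [S.potential_nonneg κ hat]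
  have h2 : 1 + S.potential κ t ≤ 2 * Φ t := by linarith [hΦ t, neg_abs_le (Φ S.a)]
  calc Φ t ^ (-e) = 2 ^ e * (2 * Φ t) ^ (-e) := by
        rw [mul_rpow zero_le_two (by linarith [abs_nonneg (Φ S.a)]), rpow_neg zero_le_two,
          mul_inv_cancel_left₀ (rpow_pos_of_pos two_pos e).ne']
    _ ≤ 2 ^ e * S.koIntegrand κ t :=
        mul_le_mul_of_nonneg_left (rpow_le_rpow_of_nonpos h1 h2 (by linarith))
          (rpow_nonneg zero_le_two e)

lemma exists_lt_koIntegral (hκ : 0 ≤ κ)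
    (hKO : ∀ b : ℝ, 0 < b → ∫⁻ t in Ioi b,
      ENNReal.ofReal ((∫ s in (0:ℝ)..t, S.g s ^ κ) ^ (-(1 / (κ * S.θ + 1)))) = ⊤) (K : ℝ) :
    ∃ x, S.a ≤ x ∧ K < S.koIntegral κ x := by
  obtain ⟨b, hb, hab, hcomp⟩ := S.exists_rpow_integral_le_koIntegrand hκ
  obtain ⟨x, hbx, hx⟩ := exists_lt_integral_of_not_integrableOn_Ioi
    ((S.continuousOn_koIntegrand κ).mono (Ici_subset_Ici.2 hab))
    (fun t ht => (S.koIntegrand_pos κ (hab.trans (le_of_lt ht))).le)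
    (not_integrableOn_Ioi_of_lintegral_eq_top (hKO b hb) hcomp) (K - S.koIntegral κ b)
  have hsub : S.koIntegral κ x - S.koIntegral κ b = ∫ t in b..x, S.koIntegrand κ t :=
    integral_interval_sub_left (S.intervalIntegrable_koIntegrand κ le_rfl (hab.trans hbx))
      (S.intervalIntegrable_koIntegrand κ le_rfl hab)
  exact ⟨x, hab.trans hbx, by linarith⟩

/-! ### A priori bound -/

def growthFactor (κ r : ℝ) : ℝ :=
  (κ * S.θ + 1) / S.θ * S.C ^ (κ * S.θ) * S.τ ^ (1 - κ) * r ^ (κ * (S.τ - S.θ * S.q) - 1)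

lemma growthFactor_nonneg (hκ : 0 ≤ κ) {r : ℝ} (hr : 0 ≤ r) : 0 ≤ S.growthFactor κ r := by
  have := S.θ_pos
  have := S.C_pos
  have := S.τ_pos
  unfold growthFactor
  positivity

lemma growthFactor_le_growthFactor (hκ : 0 ≤ κ) (hκτ : 1 ≤ κ * (S.τ - S.θ * S.q)) {s r : ℝ}
    (hs : 0 ≤ s) (hsr : s ≤ r) : S.growthFactor κ s ≤ S.growthFactor κ r := by
  have := S.θ_pos
  have := S.C_pos
  have := S.τ_pos
  unfold growthFactor
  gcongr

lemma rhsDeriv_mul_rhs_rpow_le (hv : Monotone v) (hκ : 1 ≤ κ) {s : ℝ} (hs : 0 < s) :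
    S.rhsDeriv v s * (κ * S.θ + 1) * S.rhs v s ^ (κ * S.θ + 1 - 1) ≤
      S.growthFactor κ s * S.g (v s) ^ κ * S.rhs v s := by
  have hA := S.flux_pos hv hs
  have hG := S.g_pos (v s)
  have hψ := S.rhs_pos hv hs
  have hτ := S.τ_pos
  have hθ := S.θ_pos
  have hC := S.C_pos
  have hm : 0 < κ * S.θ + 1 := by nlinarith
  have hpow : S.rhs v s ^ (κ * S.θ) =
      S.C ^ (κ * S.θ) * s ^ (-(S.q * (κ * S.θ))) * S.flux v s ^ κ := by
    rw [rhs_apply, mul_rpow (by positivity) (by positivity), mul_rpow hC.le (by positivity),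
      ← rpow_mul hs.le, ← rpow_mul hA.le, neg_mul, one_div_mul_eq_div,
      mul_div_cancel_right₀ _ hθ.ne']
  have hexp : S.g (v s) * s ^ (S.τ - 1) * s ^ (-(S.q * (κ * S.θ))) *
      (S.g (v s) * s ^ S.τ / S.τ) ^ (κ - 1) =
        S.τ ^ (1 - κ) * s ^ (κ * (S.τ - S.θ * S.q) - 1) * S.g (v s) ^ κ := by
    have e1 : S.g (v s) ^ κ = S.g (v s) * S.g (v s) ^ (κ - 1) := by
      rw [← rpow_one_add' hG.le (by linarith), add_sub_cancel]
    have e2 : s ^ (κ * (S.τ - S.θ * S.q) - 1) =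
        s ^ (S.τ - 1) * s ^ (-(S.q * (κ * S.θ))) * s ^ (S.τ * (κ - 1)) := by
      rw [← rpow_add hs, ← rpow_add hs]
      ring_nf
    have e3 : S.τ ^ (1 - κ) = (S.τ ^ (κ - 1))⁻¹ := by
      rw [← rpow_neg hτ.le, neg_sub]
    rw [div_rpow (by positivity) hτ.le, mul_rpow hG.le (by positivity), ← rpow_mul hs.le, e1,
      e2, e3]
    field_simp
  calc S.rhsDeriv v s * (κ * S.θ + 1) * S.rhs v s ^ (κ * S.θ + 1 - 1)
      ≤ S.rhs v s * (s ^ (S.τ - 1) * S.g (v s) / (S.θ * S.flux v s)) * (κ * S.θ + 1) *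
          S.rhs v s ^ (κ * S.θ) := by
        rw [add_sub_cancel_right]
        gcongr
        exact S.rhsDeriv_le hs
    _ = (κ * S.θ + 1) / S.θ * S.C ^ (κ * S.θ) * S.rhs v s *
          (S.g (v s) * s ^ (S.τ - 1) * s ^ (-(S.q * (κ * S.θ))) * S.flux v s ^ (κ - 1)) := by
        rw [hpow, rpow_sub_one hA.ne']
        field_simp
    _ ≤ (κ * S.θ + 1) / S.θ * S.C ^ (κ * S.θ) * S.rhs v s *
          (S.g (v s) * s ^ (S.τ - 1) * s ^ (-(S.q * (κ * S.θ))) *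
            (S.g (v s) * s ^ S.τ / S.τ) ^ (κ - 1)) := by
        gcongr
        exact S.flux_le hv hs.le
    _ = S.growthFactor κ s * S.g (v s) ^ κ * S.rhs v s := by
        rw [hexp, growthFactor]
        ring

lemma rhs_rpow_le (hv : Monotone v) (hvc : ContinuousOn v (Ici 0)) (hv_le : v ≤ S.picard v)
    (hκ : 1 ≤ κ) (hκτ : 1 ≤ κ * (S.τ - S.θ * S.q)) {r : ℝ} (hr : 0 < r) :
    S.rhs v r ^ (κ * S.θ + 1) ≤ S.growthFactor κ r * S.potential κ (S.picard v r) := by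
  set c := S.growthFactor κ r
  have hm : 1 ≤ κ * S.θ + 1 := by nlinarith [S.θ_pos]
  suffices 0 ≤ c * S.potential κ (S.picard v r) - S.rhs v r ^ (κ * S.θ + 1) by linarith
  refine le_of_tendsto_nhdsGT_of_hasDerivAt_nonneg
    (D := fun s => c * S.potential κ (S.picard v s) - S.rhs v s ^ (κ * S.θ + 1))
    (D' := fun s => c * (S.g (S.picard v s) ^ κ * S.rhs v s) -
      S.rhsDeriv v s * (κ * S.θ + 1) * S.rhs v s ^ (κ * S.θ + 1 - 1)) hr
    (fun s hs => ?_) (fun s hs => ?_) ?_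
  · exact (((S.hasDerivAt_potential κ _).comp s (S.hasDerivAt_picard hv hs.1)).const_mul c).sub
      ((S.hasDerivAt_rhs hv (hvc.continuousAt (Ici_mem_nhds hs.1)) hs.1).rpow_const (Or.inr hm))
  · have hG := (S.g_pos (v s)).le
    have hc : S.growthFactor κ s * S.g (v s) ^ κ ≤ c * S.g (S.picard v s) ^ κ :=
      mul_le_mul (S.growthFactor_le_growthFactor (by linarith) hκτ hs.1.le hs.2.le)
        (rpow_le_rpow hG (S.monotone_g (hv_le s)) (by linarith)) (rpow_nonneg hG _)
        (S.growthFactor_nonneg (by linarith) hr.le)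
    have := mul_le_mul_of_nonneg_right hc (S.rhs_pos hv hs.1).le
    nlinarith [S.rhsDeriv_mul_rhs_rpow_le hv hκ hs.1]
  · have hpot := ((S.continuous_potential κ).tendsto S.a).comp (S.tendsto_picard_nhdsGT_zero hv)
    have hrhs := (S.tendsto_rhs_zero hv).rpow_const (p := κ * S.θ + 1) (Or.inr (by linarith))
    rw [potential, integral_same] at hpot
    rw [zero_rpow (by linarith)] at hrhs
    simpa using (hpot.const_mul c).sub hrhs

lemma koIntegral_picard_le (hv : Monotone v) (hvc : ContinuousOn v (Ici 0))
    (hv_le : v ≤ S.picard v) (hκ : 1 ≤ κ) (hκτ : 1 ≤ κ * (S.τ - S.θ * S.q)) {r : ℝ} (hr : 0 < r) :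
    S.koIntegral κ (S.picard v r) ≤ S.growthFactor κ r ^ (1 / (κ * S.θ + 1)) * r := by
  set c := S.growthFactor κ r
  set e := 1 / (κ * S.θ + 1)
  have hm : 0 < κ * S.θ + 1 := by nlinarith [S.θ_pos]
  have hc : 0 ≤ c := S.growthFactor_nonneg (by linarith) hr.le
  have hrhs : ∀ s ∈ Ioo 0 r, S.rhs v s ≤ c ^ e * (1 + S.potential κ (S.picard v s)) ^ e := by
    intro s hs
    have hP := S.potential_nonneg κ (S.le_picard v s)
    have h : S.rhs v s ^ (κ * S.θ + 1) ≤ c * (1 + S.potential κ (S.picard v s)) :=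
      (S.rhs_rpow_le hv hvc hv_le hκ hκτ hs.1).trans
        (mul_le_mul (S.growthFactor_le_growthFactor (by linarith) hκτ hs.1.le hs.2.le)
          (by linarith) hP hc)
    rw [← mul_rpow hc (by linarith), ← rpow_rpow_inv (S.rhs_pos hv hs.1).le hm.ne', ← one_div]
    exact rpow_le_rpow (rpow_nonneg (S.rhs_pos hv hs.1).le _) h (one_div_nonneg.2 hm.le)
  suffices 0 ≤ c ^ e * r - S.koIntegral κ (S.picard v r) by linarith
  refine le_of_tendsto_nhdsGT_of_hasDerivAt_nonneg
    (D := fun s => c ^ e * s - S.koIntegral κ (S.picard v s))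
    (D' := fun s => c ^ e * 1 - S.koIntegrand κ (S.picard v s) * S.rhs v s) hr
    (fun s hs => ((hasDerivAt_id s).const_mul _).sub
      ((S.hasDerivAt_koIntegral κ (S.le_picard v s)).comp s (S.hasDerivAt_picard hv hs.1)))
    (fun s hs => ?_) ?_
  · have hP : 0 < 1 + S.potential κ (S.picard v s) := by
      linarith [S.potential_nonneg κ (S.le_picard v s)]
    have : S.koIntegrand κ (S.picard v s) * S.rhs v s ≤ c ^ e :=
      calc S.koIntegrand κ (S.picard v s) * S.rhs v s
          ≤ (1 + S.potential κ (S.picard v s)) ^ (-e) *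
              (c ^ e * (1 + S.potential κ (S.picard v s)) ^ e) :=
            mul_le_mul_of_nonneg_left (hrhs s hs) (rpow_nonneg hP.le _)
        _ = c ^ e := by
            rw [rpow_neg hP.le, mul_comm (c ^ e), ← mul_assoc,
              inv_mul_cancel₀ (rpow_pos_of_pos hP e).ne', one_mul]
    linarith
  · have hko := (S.hasDerivAt_koIntegral κ le_rfl).continuousAt.tendsto.comp
      (S.tendsto_picard_nhdsGT_zero hv)
    have hid : Tendsto (fun s : ℝ => c ^ e * s) (𝓝[>] 0) (𝓝 0) := by
      simpa using ((continuous_const_mul (c ^ e)).tendsto 0).mono_left nhdsWithin_le_nhds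
    rw [koIntegral, integral_same] at hko
    simpa using hid.sub hko

/-! ### Monotone iteration -/

def iterate (n : ℕ) : ℝ → ℝ := S.picard^[n] fun _ => S.a

lemma iterate_succ (n : ℕ) : S.iterate (n + 1) = S.picard (S.iterate n) :=
  Function.iterate_succ_apply' _ _ _

lemma monotone_iterate : ∀ n, Monotone (S.iterate n)
  | 0 => monotone_const
  | n + 1 => by rw [iterate_succ]; exact S.monotone_picard (monotone_iterate n)

lemma continuousOn_iterate : ∀ n, ContinuousOn (S.iterate n) (Ici 0)
  | 0 => continuousOn_const
  | n + 1 => by rw [iterate_succ]; exact S.continuousOn_picard (S.monotone_iterate n)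

lemma iterate_le_iterate : Monotone S.iterate := by
  refine monotone_nat_of_le_succ fun n => ?_
  induction n with
  | zero => exact fun r => S.le_picard _ r
  | succ n ih =>
    rw [iterate_succ, iterate_succ]
    exact S.picard_le_picard (S.monotone_iterate n) (S.monotone_iterate (n + 1)) ih

lemma iterate_le_of_lt_koIntegral (hκ : 1 ≤ κ) (hκτ : 1 ≤ κ * (S.τ - S.θ * S.q)) {r x : ℝ}
    (hr : 0 < r) (hax : S.a ≤ x)
    (hx : S.growthFactor κ r ^ (1 / (κ * S.θ + 1)) * r < S.koIntegral κ x) (n : ℕ) :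
    S.iterate n r ≤ x := by
  cases n with
  | zero => exact hax
  | succ n =>
    rw [iterate_succ]
    by_contra! hlt
    have hle := S.koIntegral_picard_le (S.monotone_iterate n) (S.continuousOn_iterate n)
      ((S.iterate_le_iterate n.le_succ).trans_eq (S.iterate_succ n)) hκ hκτ hr
    linarith [S.monotoneOn_koIntegral κ hax (S.le_picard _ r) hlt.le]

lemma bddAbove_range_iterate (hκ : 1 ≤ κ) (hκτ : 1 ≤ κ * (S.τ - S.θ * S.q))
    (hKO : ∀ b : ℝ, 0 < b → ∫⁻ t in Ioi b,
      ENNReal.ofReal ((∫ s in (0:ℝ)..t, S.g s ^ κ) ^ (-(1 / (κ * S.θ + 1)))) = ⊤) :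
    BddAbove (range S.iterate) := by
  have hbound : ∀ r : ℝ, ∃ x, ∀ n, S.iterate n r ≤ x := fun r => by
    have hr : 0 < max r 1 := lt_max_of_lt_right one_pos
    obtain ⟨x, hax, hx⟩ := S.exists_lt_koIntegral (by linarith) hKO
      (S.growthFactor κ (max r 1) ^ (1 / (κ * S.θ + 1)) * max r 1)
    exact ⟨x, fun n => (S.monotone_iterate n (le_max_left r 1)).trans
      (S.iterate_le_of_lt_koIntegral hκ hκτ hr hax hx n)⟩
  choose B hB using hbound
  exact ⟨B, forall_mem_range.2 fun n r => hB r n⟩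

section Limit

variable {u : ℕ → ℝ → ℝ} (hu : ∀ n, Monotone (u n)) (hw : Monotone w) (hmono : Monotone u)
  (hlim : Tendsto u atTop (𝓝 w))
include hu hw hmono hlim

lemma tendsto_flux_of_monotone {t : ℝ} (ht : 0 ≤ t) :
    Tendsto (fun n => S.flux (u n) t) atTop (𝓝 (S.flux w t)) := by
  simp only [flux, integral_of_le ht]
  refine integral_tendsto_of_tendsto_of_monotone
    (fun n => (S.intervalIntegrable_fluxIntegrand (hu n) ht).1)
    (S.intervalIntegrable_fluxIntegrand hw ht).1 ?_ ?_
  · filter_upwards [ae_restrict_mem measurableSet_Ioc] with s hs n m hnm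
    exact mul_le_mul_of_nonneg_left (S.monotone_g (hmono hnm s)) (rpow_nonneg hs.1.le _)
  · filter_upwards with s
    exact ((S.continuous_g.tendsto _).comp (tendsto_pi_nhds.1 hlim s)).const_mul _

lemma tendsto_picard_of_monotone :
    Tendsto (fun n => S.picard (u n)) atTop (𝓝 (S.picard w)) := by
  refine tendsto_pi_nhds.2 fun r => (?_ : Tendsto _ _ _).const_add S.a
  have hr := le_max_right r 0
  simp only [integral_of_le hr]
  refine integral_tendsto_of_tendsto_of_monotone
    (fun n => (S.intervalIntegrable_rhs (hu n) hr).1) (S.intervalIntegrable_rhs hw hr).1 ?_ ?_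
  · filter_upwards [ae_restrict_mem measurableSet_Ioc] with t ht n m hnm
    exact S.rhs_le_rhs (hu n) (hu m) (hmono hnm) ht.1.le
  · filter_upwards [ae_restrict_mem measurableSet_Ioc] with t ht
    exact ((S.tendsto_flux_of_monotone hu hw hmono hlim ht.1.le).rpow_const
      (Or.inl (S.flux_pos hw ht.1).ne')).const_mul _

end Limit

lemma exists_monotone_picard_eq (hbdd : BddAbove (range S.iterate)) :
    ∃ v, Monotone v ∧ S.picard v = v := by
  have hlim := tendsto_atTop_ciSup S.iterate_le_iterate hbdd
  have hw : Monotone (⨆ n, S.iterate n) := fun r r' h =>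
    le_of_tendsto_of_tendsto' (tendsto_pi_nhds.1 hlim r) (tendsto_pi_nhds.1 hlim r')
      fun n => S.monotone_iterate n h
  refine ⟨_, hw, tendsto_nhds_unique (S.tendsto_picard_of_monotone S.monotone_iterate hw
    S.iterate_le_iterate hlim) ?_⟩
  simpa only [iterate_succ] using (tendsto_add_atTop_iff_nat 1).2 hlim

section FixedPoint

variable (hv : Monotone v) (hfix : S.picard v = v)
include hv hfix

lemma hasDerivAt_of_picard_eq {r : ℝ} (hr : 0 < r) : HasDerivAt v (S.rhs v r) r := by
  simpa only [hfix] using S.hasDerivAt_picard hv hr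

lemma solvesCauchy_of_picard_eq : SolvesCauchy S.C S.q S.τ S.θ S.a S.g ⊤ v := by
  refine ⟨?_, ?_, fun r hr _ => S.hasDerivAt_of_picard_eq hv hfix hr⟩
  · have hset : {r : ℝ | 0 ≤ r ∧ ENNReal.ofReal r < ⊤} = Ici 0 := by ext; simp
    rw [hset, ← hfix]
    exact S.continuousOn_picard hv
  · rw [← hfix]
    exact S.picard_of_nonpos v le_rfl

lemma hasDerivAt_deriv_of_picard_eq {r : ℝ} (hr : 0 < r) :
    HasDerivAt (deriv v) (S.rhsDeriv v r) r := by
  have hvc : ContinuousOn v (Ici 0) := hfix ▸ S.continuousOn_picard hv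
  refine (S.hasDerivAt_rhs hv (hvc.continuousAt (Ici_mem_nhds hr)) hr).congr_of_eventuallyEq ?_
  filter_upwards [Ioi_mem_nhds hr] with s hs using (S.hasDerivAt_of_picard_eq hv hfix hs).deriv

end FixedPoint

end CauchyData

end

/-- Part (a) of Theorem 1.3: if `θq < τ < θq + 1` and, for some `ε ∈ (0, τ - θq)`
and `κ = (1-ε)/(τ-θq-ε)`, the modified Keller–Osserman condition
`∫_b^∞ (∫_0^t g(s)^κ ds)^{-1/(κθ+1)} dt = +∞` holds for every `b > 0`, then for every
initial value `a ≥ 0` the Cauchy problem (★) has an entire solution on `[0, ∞)` with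
`v'(0) = 0` (right derivative) and `v' > 0`, `v'' > 0` on `(0, ∞)`. -/
theorem entire_existence_of_modified_KO
    (g : ℝ → ℝ) (hg_cont : Continuous g) (hg_mono : Monotone g) (hg_pos : ∀ t, 0 < g t)
    (C q θ τ : ℝ) (hC : 0 < C) (hq : 0 ≤ q) (hθ : 0 < θ)
    (hτ1 : θ * q < τ) (hτ2 : τ < θ * q + 1)
    (hKO : ∃ ε : ℝ, 0 < ε ∧ ε < τ - θ * q ∧
      ∀ b : ℝ, 0 < b →
        ∫⁻ t in Set.Ioi b,
          ENNReal.ofReal ((∫ s in (0:ℝ)..t, g s ^ ((1 - ε) / (τ - θ * q - ε))) ^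
            (-(1 / ((1 - ε) / (τ - θ * q - ε) * θ + 1)))) = ⊤) :
    ∀ a : ℝ, 0 ≤ a → ∃ v : ℝ → ℝ,
      SolvesCauchy C q τ θ a g ⊤ v ∧
      HasDerivWithinAt v 0 (Set.Ici 0) 0 ∧
      ∀ r : ℝ, 0 < r →
        0 < deriv v r ∧ DifferentiableAt ℝ (deriv v) r ∧ 0 < deriv (deriv v) r := by
  rintro a -
  obtain ⟨ε, hε, hετ, hKO⟩ := hKO
  have hκ : 1 ≤ (1 - ε) / (τ - θ * q - ε) := by
    rw [le_div_iff₀ (by linarith)]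
    linarith
  have hκτ : 1 ≤ (1 - ε) / (τ - θ * q - ε) * (τ - θ * q) := by
    rw [div_mul_eq_mul_div, le_div_iff₀ (by linarith)]
    nlinarith
  let S : CauchyData := ⟨g, C, q, θ, τ, a, hg_cont, hg_mono, hg_pos, hC, hq, hθ, hτ1⟩
  obtain ⟨v, hv, hfix⟩ := S.exists_monotone_picard_eq (S.bddAbove_range_iterate hκ hκτ hKO)
  refine ⟨v, S.solvesCauchy_of_picard_eq hv hfix, hfix ▸ S.hasDerivWithinAt_picard_zero hv,
    fun r hr => ?_⟩
  have hv'' := S.hasDerivAt_deriv_of_picard_eq hv hfix hr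
  refine ⟨?_, hv''.differentiableAt, hv''.deriv ▸ S.rhsDeriv_pos hv hr⟩
  rw [(S.hasDerivAt_of_picard_eq hv hfix hr).deriv]
  exact S.rhs_pos hv hr
end

section
/- Let θ > 0 and let g : ℝ → ℝ be non-decreasing, everywhere positive, and continuous. If ∫_b^∞ (∫_0^t g(s) ds)^{-1/(θ+1)} dt < ∞ for some b > 0, then: (i) t · (∫_0^t g(s) ds)^{-1/(θ+1)} → 0 as t → +∞; and (ii) g(t)/t^θ → +∞ as t → +∞. In particular, for every constant a ∈ ℝ there exists t₁ > max{a,0} such that g(t)^{1/θ} > t − a for all t > t₁. -/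
open Real MeasureTheory Set Filter Topology ENNReal

/-!
Write `G t = ∫_0^t g`. Since `G ^ (-1/(θ+1))` is nonincreasing, `(t/2) G(t) ^ (-1/(θ+1))` is at
most its integral over `(t/2, t]`, a tail of a convergent integral; this gives (i). Raising (i)
to the power `-(θ+1)` gives `G t / t ^ (θ+1) → ∞`, and `G t ≤ t g t` gives (ii). Finally
`g t ^ (1/θ) / t → ∞`, so `g t ^ (1/θ) - t → ∞`, which gives the last claim.
-/

theorem tendsto_setLIntegral_Ioi_atTop_zero {f : ℝ → ℝ≥0∞} {b : ℝ}
    (hf : ∫⁻ x in Ioi b, f x ≠ ∞) :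
    Tendsto (fun t => ∫⁻ x in Ioi t, f x) atTop (𝓝 0) := by
  set ν := (volume.restrict (Ioi b)).withDensity f
  have hν : ∀ t, b ≤ t → ν (Ioi t) = ∫⁻ x in Ioi t, f x := fun t ht => by
    rw [withDensity_apply _ measurableSet_Ioi, Measure.restrict_restrict measurableSet_Ioi,
      inter_eq_left.2 (Ioi_subset_Ioi ht)]
  have hlim : Tendsto (ν ∘ Ioi) atTop (𝓝 (ν (⋂ t, Ioi t))) :=
    tendsto_measure_iInter_atTop (fun _ => measurableSet_Ioi.nullMeasurableSet)
      (fun _ _ h => Ioi_subset_Ioi h) ⟨b, by rwa [hν b le_rfl]⟩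
  rw [(iInter_eq_empty_iff (f := Ioi)).2 fun x => ⟨x, lt_irrefl x⟩, measure_empty] at hlim
  exact hlim.congr' (eventually_atTop.2 ⟨b, hν⟩)

theorem ofReal_mul_le_setLIntegral_Ioi_of_antitoneOn {F : ℝ → ℝ} {b t : ℝ}
    (hF : AntitoneOn F (Ici b)) (hbt : b ≤ t / 2) (ht : 0 ≤ t) :
    ENNReal.ofReal (t / 2 * F t) ≤ ∫⁻ x in Ioi (t / 2), ENNReal.ofReal (F x) :=
  calc ENNReal.ofReal (t / 2 * F t)
      = ∫⁻ _ in Ioc (t / 2) t, ENNReal.ofReal (F t) := by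
        rw [setLIntegral_const, Real.volume_Ioc, ← ENNReal.ofReal_mul' (by linarith)]
        ring_nf
    _ ≤ ∫⁻ x in Ioc (t / 2) t, ENNReal.ofReal (F x) :=
        setLIntegral_mono' measurableSet_Ioc fun x hx => ENNReal.ofReal_le_ofReal <|
          hF (mem_Ici.2 (hbt.trans hx.1.le)) (mem_Ici.2 (by linarith)) hx.2
    _ ≤ ∫⁻ x in Ioi (t / 2), ENNReal.ofReal (F x) := lintegral_mono_set Ioc_subset_Ioi_self

theorem tendsto_mul_zero_of_antitoneOn_of_lintegral_Ioi_ne_top {F : ℝ → ℝ} {b : ℝ}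
    (hF : AntitoneOn F (Ici b)) (hF_nonneg : ∀ t, b ≤ t → 0 ≤ F t)
    (hint : ∫⁻ x in Ioi b, ENNReal.ofReal (F x) ≠ ∞) :
    Tendsto (fun t => t * F t) atTop (𝓝 0) := by
  have htail :
      Tendsto (fun t : ℝ => ∫⁻ x in Ioi (t / 2), ENNReal.ofReal (F x)) atTop (𝓝 0) :=
    (tendsto_setLIntegral_Ioi_atTop_zero hint).comp (tendsto_id.atTop_div_const two_pos)
  have hhalf : Tendsto (fun t => ENNReal.ofReal (t / 2 * F t)) atTop (𝓝 0) := by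
    refine tendsto_of_tendsto_of_tendsto_of_le_of_le' tendsto_const_nhds htail
      (.of_forall fun _ => zero_le) ?_
    filter_upwards [eventually_ge_atTop (2 * b), eventually_ge_atTop 0] with t hbt ht
    exact ofReal_mul_le_setLIntegral_Ioi_of_antitoneOn hF (by linarith) ht
  have hreal := ((ENNReal.tendsto_toReal ENNReal.zero_ne_top).comp hhalf).const_mul 2
  rw [ENNReal.toReal_zero, mul_zero] at hreal
  refine hreal.congr' ?_
  filter_upwards [eventually_ge_atTop (2 * b), eventually_ge_atTop 0] with t hbt ht
  rw [Function.comp_apply,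
    ENNReal.toReal_ofReal (mul_nonneg (by linarith) (hF_nonneg t (by linarith)))]
  ring

theorem tendsto_div_rpow_atTop_of_tendsto_mul_rpow_neg {G : ℝ → ℝ} {p : ℝ} (hp : 0 < p)
    (hG : ∀ᶠ t in atTop, 0 < G t) (h : Tendsto (fun t => t * G t ^ (-(1 / p))) atTop (𝓝 0)) :
    Tendsto (fun t => G t / t ^ p) atTop atTop := by
  have hpos : ∀ᶠ t in atTop, 0 < t ∧ 0 < G t := (eventually_gt_atTop 0).and hG
  have h' : Tendsto (fun t => t * G t ^ (-(1 / p))) atTop (𝓝[>] 0) :=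
    tendsto_nhdsWithin_iff.2 ⟨h, hpos.mono fun t ht => mul_pos ht.1 (rpow_pos_of_pos ht.2 _)⟩
  refine ((tendsto_rpow_neg_nhdsGT_zero (neg_neg_of_pos hp)).comp h').congr' ?_
  filter_upwards [hpos] with t ⟨ht, hGt⟩
  rw [Function.comp_apply, mul_rpow ht.le (rpow_nonneg hGt.le _), ← rpow_mul hGt.le,
    neg_mul_neg, one_div_mul_cancel hp.ne', Real.rpow_one, rpow_neg ht.le, inv_mul_eq_div]

theorem integral_div_rpow_add_one_le_div_rpow {g : ℝ → ℝ} (hg : Monotone g) {θ t : ℝ}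
    (ht : 0 < t) : (∫ s in 0..t, g s) / t ^ (θ + 1) ≤ g t / t ^ θ := by
  have hint : ∫ s in 0..t, g s ≤ t * g t := by
    simpa using intervalIntegral.integral_mono_on ht.le
      (hg.intervalIntegrable (μ := volume)) intervalIntegrable_const fun s hs => hg hs.2
  rw [rpow_add_one ht.ne', div_le_div_iff₀ (by positivity) (by positivity)]
  nlinarith [rpow_pos_of_pos ht θ]

theorem tendsto_rpow_inv_sub_atTop {g : ℝ → ℝ} {θ : ℝ} (hθ : 0 < θ)
    (hg : Tendsto (fun t => g t / t ^ θ) atTop atTop) :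
    Tendsto (fun t => g t ^ (1 / θ) - t) atTop atTop := by
  have hroot : Tendsto (fun t => g t ^ (1 / θ) / t) atTop atTop := by
    refine ((tendsto_rpow_atTop (one_div_pos.2 hθ)).comp hg).congr' ?_
    filter_upwards [eventually_gt_atTop 0, hg.eventually_gt_atTop 0] with t ht hgt
    have hg0 : 0 ≤ g t := ((div_pos_iff_of_pos_right (rpow_pos_of_pos ht θ)).1 hgt).le
    rw [Function.comp_apply, div_rpow hg0 (rpow_nonneg ht.le θ), ← rpow_mul ht.le,
      mul_one_div_cancel hθ.ne', Real.rpow_one]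
  refine (tendsto_id.atTop_mul_atTop₀ (tendsto_atTop_add_const_right _ (-1) hroot)).congr' ?_
  filter_upwards [eventually_gt_atTop 0] with t ht
  rw [id, mul_add, mul_div_cancel₀ _ ht.ne', mul_neg_one, sub_eq_add_neg]

theorem asymptotics_of_KO_failure_general
    (θ : ℝ) (hθ : 0 < θ)
    (g : ℝ → ℝ) (hg_mono : Monotone g) (hg_pos : ∀ t, 0 < g t)
    (hKOfail : ∃ b : ℝ, 0 < b ∧
      ∫⁻ t in Set.Ioi b,
        ENNReal.ofReal ((∫ s in (0:ℝ)..t, g s) ^ (-(1 / (θ + 1)))) < ⊤) :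
    Tendsto (fun t => t * (∫ s in (0:ℝ)..t, g s) ^ (-(1 / (θ + 1)))) atTop (𝓝 0) ∧
    Tendsto (fun t => g t / t ^ θ) atTop atTop ∧
    ∀ a : ℝ, ∃ t₁ : ℝ, max a 0 < t₁ ∧ ∀ t : ℝ, t₁ < t → t - a < g t ^ (1 / θ) := by
  obtain ⟨b, hb, hK⟩ := hKOfail
  set G : ℝ → ℝ := fun t => ∫ s in (0:ℝ)..t, g s
  have hG_pos : ∀ t, 0 < t → 0 < G t := fun t ht =>
    intervalIntegral.intervalIntegral_pos_of_pos hg_mono.intervalIntegrable hg_pos ht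
  have hG_mono : MonotoneOn G (Ici 0) := fun s hs t _ hst =>
    intervalIntegral.integral_mono_interval le_rfl hs hst
      (.of_forall fun x => (hg_pos x).le) hg_mono.intervalIntegrable
  have hF_anti : AntitoneOn (fun t => G t ^ (-(1 / (θ + 1)))) (Ici b) :=
    fun s hs t ht hst => rpow_le_rpow_of_nonpos (hG_pos s (hb.trans_le hs))
      (hG_mono (mem_Ici.2 (hb.le.trans hs)) (mem_Ici.2 (hb.le.trans ht)) hst)
      (neg_nonpos.2 (by positivity))
  have hdecay : Tendsto (fun t => t * G t ^ (-(1 / (θ + 1)))) atTop (𝓝 0) :=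
    tendsto_mul_zero_of_antitoneOn_of_lintegral_Ioi_ne_top hF_anti
      (fun t ht => (rpow_pos_of_pos (hG_pos t (hb.trans_le ht)) _).le) hK.ne
  have hgrowth : Tendsto (fun t => g t / t ^ θ) atTop atTop :=
    tendsto_atTop_mono' atTop
      ((eventually_gt_atTop 0).mono fun _ ht => integral_div_rpow_add_one_le_div_rpow hg_mono ht)
      (tendsto_div_rpow_atTop_of_tendsto_mul_rpow_neg (by positivity)
        ((eventually_gt_atTop 0).mono hG_pos) hdecay)
  refine ⟨hdecay, hgrowth, fun a => ?_⟩
  obtain ⟨T, hT⟩ :=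
    eventually_atTop.1 ((tendsto_rpow_inv_sub_atTop hθ hgrowth).eventually_gt_atTop (-a))
  refine ⟨max T (max a 0) + 1, by linarith [le_max_right T (max a 0)], fun t ht => ?_⟩
  linarith [hT t (by linarith [le_max_left T (max a 0)])]

/-- Asymptotic claims in the proof of Lemma 3.1: if the Keller–Osserman integral is
finite for some `b > 0`, then `t (∫_0^t g)^{-1/(θ+1)} → 0` and `g(t)/t^θ → +∞` as
`t → +∞`; in particular for every `a` there is `t₁ > max{a, 0}` with
`g(t)^{1/θ} > t - a` for all `t > t₁`. -/
theorem asymptotics_of_KO_failure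
    (θ : ℝ) (hθ : 0 < θ)
    (g : ℝ → ℝ) (hg_cont : Continuous g) (hg_mono : Monotone g) (hg_pos : ∀ t, 0 < g t)
    (hKOfail : ∃ b : ℝ, 0 < b ∧
      ∫⁻ t in Set.Ioi b,
        ENNReal.ofReal ((∫ s in (0:ℝ)..t, g s) ^ (-(1 / (θ + 1)))) < ⊤) :
    Tendsto (fun t => t * (∫ s in (0:ℝ)..t, g s) ^ (-(1 / (θ + 1)))) atTop (𝓝 0) ∧
    Tendsto (fun t => g t / t ^ θ) atTop atTop ∧
    ∀ a : ℝ, ∃ t₁ : ℝ, max a 0 < t₁ ∧ ∀ t : ℝ, t₁ < t → t - a < g t ^ (1 / θ) :=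
  asymptotics_of_KO_failure_general θ hθ g hg_mono hg_pos hKOfail
end
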